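/- arXiv:0903.1881 — 7 statements merged into one kernel-verified Lean document; each statement's English description precedes it below -/
import Mathlib

section
/- Let (X, φ, ℤ^d) be a minimal free Cantor system, C ⊂ X a nonempty clopen set, and x₀ ∈ C. Then there is M₀ > 0 such that for all M > M₀ there exists a clopen set D ⊂ C with x₀ ∈ D such that D is M-regular, i.e., for every x ∈ X the return-time set R_D(x) = {v ∈ ℤ^d : φ^v(x) ∈ D} is M-separated and 2M-syndetic as a subset of ℤ^d. -/
/-- The Euclidean distance between a point of `ℝ^d` and a vector of `ℤ^d`. -/
noncomputable def zdistR {d : ℕ} (p : Fin d → ℝ) (v : Fin d → ℤ) : ℝ :=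
  Real.sqrt (∑ i, (p i - (v i : ℝ)) ^ 2)

/-- The Euclidean distance between two vectors of `ℤ^d`. -/
noncomputable def zdist {d : ℕ} (v w : Fin d → ℤ) : ℝ :=
  Real.sqrt (∑ i, ((v i : ℝ) - (w i : ℝ)) ^ 2)

namespace Stmt4Aux
variable {d : ℕ}

lemma zdist_eq_dist (v w : Fin d → ℤ) :
    zdist v w = dist (show EuclideanSpace ℝ (Fin d) from WithLp.toLp 2 fun i => (v i : ℝ))
      (show EuclideanSpace ℝ (Fin d) from WithLp.toLp 2 fun i => (w i : ℝ)) := by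
  rw [EuclideanSpace.dist_eq, zdist]
  congr 1
  exact Finset.sum_congr rfl fun i _ => by rw [Real.dist_eq, sq_abs]

lemma zdistR_eq_dist (p : Fin d → ℝ) (v : Fin d → ℤ) :
    zdistR p v = dist (show EuclideanSpace ℝ (Fin d) from WithLp.toLp 2 p)
      (show EuclideanSpace ℝ (Fin d) from WithLp.toLp 2 fun i => (v i : ℝ)) := by
  rw [EuclideanSpace.dist_eq, zdistR]
  congr 1
  exact Finset.sum_congr rfl fun i _ => by rw [Real.dist_eq, sq_abs]

lemma zdist_nonneg (v w : Fin d → ℤ) : 0 ≤ zdist v w := Real.sqrt_nonneg _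

lemma zdistR_triangle (p : Fin d → ℝ) (v u : Fin d → ℤ) :
    zdistR p u ≤ zdistR p v + zdist v u := by
  rw [zdistR_eq_dist, zdistR_eq_dist, zdist_eq_dist]
  exact dist_triangle _ _ _

lemma zdist_comm (v w : Fin d → ℤ) : zdist v w = zdist w v := by
  unfold zdist; congr 1; exact Finset.sum_congr rfl fun i _ => by ring

lemma zdist_zero_sub (v w : Fin d → ℤ) : zdist 0 (v - w) = zdist v w := by
  unfold zdist; congr 1
  refine Finset.sum_congr rfl fun i _ => ?_
  simp only [Pi.zero_apply, Pi.sub_apply]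
  push_cast
  ring

lemma zdist_self_sub (v w : Fin d → ℤ) : zdist v (v - w) = zdist 0 w := by
  unfold zdist; congr 1
  refine Finset.sum_congr rfl fun i _ => ?_
  simp only [Pi.zero_apply, Pi.sub_apply]
  push_cast
  ring

lemma zdist_zero_neg (w : Fin d → ℤ) : zdist 0 (-w) = zdist 0 w := by
  unfold zdist; congr 1
  refine Finset.sum_congr rfl fun i _ => ?_
  simp only [Pi.zero_apply, Pi.neg_apply]
  push_cast
  ring

lemma zdist_add_left (u v w : Fin d → ℤ) : zdist (u + v) (u + w) = zdist v w := by
  unfold zdist; congr 1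
  refine Finset.sum_congr rfl fun i _ => ?_
  simp only [Pi.add_apply]
  push_cast
  ring

lemma zdistR_round (p : Fin d → ℝ) :
    zdistR p (fun i => round (p i)) ≤ Real.sqrt d := by
  unfold zdistR
  have h : (∑ i, (p i - ((round (p i) : ℤ) : ℝ)) ^ 2) ≤ (d : ℝ) := by
    have h2 : (∑ i, (p i - ((round (p i) : ℤ) : ℝ)) ^ 2) ≤ ∑ _i : Fin d, (1 : ℝ) := by
      refine Finset.sum_le_sum fun i _ => ?_
      have h1 : |p i - ((round (p i) : ℤ) : ℝ)| ≤ 1 / 2 := abs_sub_round (p i)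
      have h3 : (p i - ((round (p i) : ℤ) : ℝ)) ^ 2 ≤ (1 / 2) ^ 2 := by
        rw [← sq_abs]
        exact pow_le_pow_left₀ (abs_nonneg _) h1 2
      nlinarith
    have h4 : (∑ _i : Fin d, (1 : ℝ)) = (d : ℝ) := by simp
    linarith
  refine Real.sqrt_le_sqrt ?_
  simpa using h

lemma finite_ball (M : ℝ) : {w : Fin d → ℤ | zdist 0 w ≤ M}.Finite := by
  have hsub : {w : Fin d → ℤ | zdist 0 w ≤ M} ⊆
      Set.Icc (fun _ => -⌈M⌉) (fun _ => ⌈M⌉) := by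
    intro w hw
    have habs : ∀ i, |(w i : ℝ)| ≤ M := by
      intro i
      have h1 : ((w i : ℝ)) ^ 2 ≤ ∑ j, (((0 : Fin d → ℤ) j : ℝ) - (w j : ℝ)) ^ 2 := by
        have := Finset.single_le_sum (f := fun j => (((0 : Fin d → ℤ) j : ℝ) - (w j : ℝ)) ^ 2)
          (fun j _ => sq_nonneg _) (Finset.mem_univ i)
        simpa using this
      have h2 : |(w i : ℝ)| ≤ zdist 0 w := by
        rw [← Real.sqrt_sq_eq_abs]
        exact Real.sqrt_le_sqrt h1
      exact h2.trans hw
    constructor <;> intro i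
    · have := (abs_le.mp (habs i)).1
      have : -(⌈M⌉ : ℝ) ≤ (w i : ℝ) := le_trans (by push_cast; linarith [Int.le_ceil M]) this
      exact_mod_cast this
    · have := (abs_le.mp (habs i)).2
      have : (w i : ℝ) ≤ (⌈M⌉ : ℝ) := this.trans (Int.le_ceil M)
      exact_mod_cast this
  exact (Set.finite_Icc _ _).subset hsub

end Stmt4Aux

open Stmt4Aux

/-- Let `(X, φ, ℤ^d)` be a minimal free Cantor system, `C ⊆ X` a nonempty
clopen set, and `x₀ ∈ C`. Then there is `M₀ > 0` such that for all `M > M₀` there exists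
a clopen set `D ⊆ C` with `x₀ ∈ D` such that `D` is `M`-regular: for every `x ∈ X` the
return-time set `R_D(x) = {v : φ^v(x) ∈ D}` is `M`-separated and `2M`-syndetic as a
subset of `ℝ^d`. -/
theorem stmt_4 {d : ℕ} {X : Type*} [MetricSpace X] [CompactSpace X]
    [TotallyDisconnectedSpace X] (hX : Perfect (Set.univ : Set X))
    (φ : (Fin d → ℤ) → X ≃ₜ X)
    (hadd : ∀ v w x, φ (v + w) x = φ v (φ w x))
    (hmin : ∀ x : X, Dense {y | ∃ v, φ v x = y})
    (hfree : ∀ (v) (x : X), φ v x = x → v = 0)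
    (C : Set X) (hC : IsClopen C) (x₀ : X) (hx₀ : x₀ ∈ C) :
    ∃ M₀ > (0 : ℝ), ∀ M : ℝ, M₀ < M →
      ∃ D : Set X, IsClopen D ∧ D ⊆ C ∧ x₀ ∈ D ∧
        ∀ x : X,
          (∀ v w : Fin d → ℤ, φ v x ∈ D → φ w x ∈ D → v ≠ w → M < zdist v w) ∧
          (∀ p : Fin d → ℝ, ∃ v : Fin d → ℤ, φ v x ∈ D ∧ zdistR p v < 2 * M) := by
  classical
  -- φ 0 is the identity
  have hid : ∀ x : X, φ 0 x = x := by
    intro x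
    have h := hadd 0 0 x
    rw [add_zero] at h
    exact ((φ 0).injective h).symm
  have hinv : ∀ (v) (x : X), φ (-v) (φ v x) = x := by
    intro v x
    rw [← hadd, neg_add_cancel, hid]
  -- finite subcover by preimages of C
  have hcover : (Set.univ : Set X) ⊆ ⋃ v : Fin d → ℤ, (φ v) ⁻¹' C := by
    intro x _
    obtain ⟨y, ⟨v, hv⟩, hyC⟩ := (hmin x).exists_mem_open hC.2 ⟨x₀, hx₀⟩
    exact Set.mem_iUnion.2 ⟨v, by simpa [hv] using hyC⟩
  obtain ⟨F, hF⟩ := isCompact_univ.elim_finite_subcover (fun v : Fin d → ℤ => (φ v) ⁻¹' C)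
    (fun v => hC.2.preimage (φ v).continuous) hcover
  set K : ℝ := ∑ v ∈ F, zdist 0 v with hK
  have hKmem : ∀ v ∈ F, zdist 0 v ≤ K :=
    fun v hv => Finset.single_le_sum (fun w _ => zdist_nonneg 0 w) hv
  have hK0 : 0 ≤ K := Finset.sum_nonneg fun w _ => zdist_nonneg 0 w
  -- syndeticity of C
  have hsynd : ∀ (x : X) (p : Fin d → ℝ), ∃ v, φ v x ∈ C ∧ zdistR p v ≤ K + Real.sqrt d := by
    intro x p
    set w : Fin d → ℤ := fun i => round (p i) with hw
    have hmem : φ w x ∈ ⋃ v ∈ F, (φ v) ⁻¹' C := hF (Set.mem_univ _)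
    obtain ⟨u, huF, hu⟩ := Set.mem_iUnion₂.1 hmem
    refine ⟨u + w, by rw [hadd]; exact hu, ?_⟩
    calc zdistR p (u + w) ≤ zdistR p w + zdist w (u + w) := zdistR_triangle p w (u + w)
      _ ≤ Real.sqrt d + K := by
          have h1 : zdistR p w ≤ Real.sqrt d := zdistR_round p
          have h2 : zdist w (u + w) = zdist 0 u := by
            have := zdist_self_sub (u + w) u
            rw [add_sub_cancel_left] at this
            rw [zdist_comm]
            exact this
          have h3 : zdist 0 u ≤ K := hKmem u huF
          linarith
      _ = K + Real.sqrt d := by ring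
  refine ⟨K + Real.sqrt d + 1, by positivity, ?_⟩
  intro M hM
  have hM0 : 0 < M := lt_trans (by positivity) hM
  -- the finite set of short nonzero vectors
  set W' : Finset (Fin d → ℤ) := ((finite_ball (d := d) M).toFinset).erase 0 with hW'
  have hW'mem : ∀ w : Fin d → ℤ, w ∈ W' ↔ w ≠ 0 ∧ zdist 0 w ≤ M := by
    intro w
    rw [hW', Finset.mem_erase, Set.Finite.mem_toFinset]
    exact Iff.rfl
  -- small self-separated clopen pieces
  have hpiece : ∀ x ∈ C, ∃ U : Set X, IsClopen U ∧ x ∈ U ∧ U ⊆ C ∧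
      ∀ y ∈ U, ∀ z ∈ U, ∀ w ∈ W', φ w y ≠ z := by
    intro x hx
    set G : Finset (Fin d → ℤ) := insert 0 W' with hG
    have hGne : G.Nonempty := ⟨0, Finset.mem_insert_self _ _⟩
    set g : (Fin d → ℤ) → ℝ := fun w => if w = 0 then 3 else dist (φ w x) x with hg
    set ε : ℝ := G.inf' hGne g / 3 with hε
    have hεpos : 0 < ε := by
      have : 0 < G.inf' hGne g := by
        rw [Finset.lt_inf'_iff]
        intro b hb
        by_cases hb0 : b = 0
        · simp [hg, hb0]
        · have hne : φ b x ≠ x := fun h => hb0 (hfree b x h)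
          simp only [hg, if_neg hb0]
          exact dist_pos.2 hne
      rw [hε]; linarith
    have hεle : ∀ w ∈ W', 3 * ε ≤ dist (φ w x) x := by
      intro w hw
      have hw0 : w ≠ 0 := ((hW'mem w).1 hw).1
      have h1 : G.inf' hGne g ≤ g w := Finset.inf'_le _ (Finset.mem_insert_of_mem hw)
      rw [hg] at h1
      simp only [if_neg hw0] at h1
      rw [hε]; linarith
    set O : Set X := (Metric.ball x ε ∩ ⋂ w ∈ W', (φ w) ⁻¹' (Metric.ball (φ w x) ε)) ∩ C
      with hO
    have hOopen : IsOpen O := by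
      refine (IsOpen.inter Metric.isOpen_ball ?_).inter hC.2
      exact isOpen_biInter_finset fun w _ => Metric.isOpen_ball.preimage (φ w).continuous
    have hxO : x ∈ O := by
      refine ⟨⟨Metric.mem_ball_self hεpos, ?_⟩, hx⟩
      exact Set.mem_iInter₂.2 fun w _ => Metric.mem_ball_self hεpos
    obtain ⟨U, hUclopen, hxU, hUO⟩ := compact_exists_isClopen_in_isOpen hOopen hxO
    refine ⟨U, hUclopen, hxU, fun y hy => (hUO hy).2, ?_⟩
    intro y hy z hz w hw hcontra
    have hyO := hUO hy
    have hzO := hUO hz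
    have h1 : dist (φ w y) (φ w x) < ε := by
      have := Set.mem_iInter₂.1 hyO.1.2 w hw
      simpa [dist_comm] using this
    have h2 : dist z x < ε := by simpa [dist_comm] using hzO.1.1
    have h3 : 3 * ε ≤ dist (φ w x) x := hεle w hw
    have h4 : dist (φ w x) x ≤ dist (φ w x) (φ w y) + dist (φ w y) x :=
      dist_triangle _ _ _
    have h5 : dist (φ w y) x = dist z x := by rw [hcontra]
    rw [dist_comm (φ w x) (φ w y)] at h4
    linarith
  -- choose the pieces
  choose Upiece hUclopen hUmem hUsub hUsep using hpiece
  set V : C → Set X := fun t => Upiece t.1 t.2 with hV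
  have hVcover : C ⊆ ⋃ t : C, V t := fun x hx =>
    Set.mem_iUnion.2 ⟨⟨x, hx⟩, hUmem x hx⟩
  obtain ⟨T, hT⟩ := hC.1.isCompact.elim_finite_subcover V
    (fun t => (hUclopen t.1 t.2).2) hVcover
  set step : Set X → Set X → Set X :=
    fun D U => D ∪ (U \ ⋃ w ∈ W', φ w '' D) with hstep
  have himgclopen : ∀ (w : Fin d → ℤ) (D : Set X), IsClopen D → IsClopen (φ w '' D) := by
    intro w D hD
    have himg : ⇑(φ w) '' D = ⇑(φ w).symm ⁻¹' D := by
      have := Equiv.image_eq_preimage_symm (φ w).toEquiv D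
      exact this
    rw [himg]
    exact hD.preimage (φ w).symm.continuous
  have hzdist00 : zdist (0 : Fin d → ℤ) 0 = 0 := by simp [zdist]
  -- key induction on the list of pieces
  have key : ∀ (L : List (Set X)) (D : Set X),
      (IsClopen D ∧ D ⊆ C ∧ ∀ y ∈ D, ∀ z ∈ D, ∀ w ∈ W', φ w y ≠ z) →
      (∀ U ∈ L, IsClopen U ∧ U ⊆ C ∧ ∀ y ∈ U, ∀ z ∈ U, ∀ w ∈ W', φ w y ≠ z) →
      (IsClopen (L.foldl step D) ∧ (L.foldl step D) ⊆ C ∧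
        ∀ y ∈ L.foldl step D, ∀ z ∈ L.foldl step D, ∀ w ∈ W', φ w y ≠ z) ∧
      D ⊆ L.foldl step D ∧
      ∀ U ∈ L, ∀ y ∈ U, ∃ w z, zdist 0 w ≤ M ∧ z ∈ L.foldl step D ∧ φ w z = y := by
    intro L
    induction L with
    | nil => exact fun D hD _ => ⟨hD, subset_rfl, by simp⟩
    | cons U L ih =>
      intro D hD hL
      obtain ⟨hUcl, hUC, hUsp⟩ := hL U List.mem_cons_self
      set E : Set X := U \ ⋃ w ∈ W', φ w '' D with hE
      have hD'clopen : IsClopen (D ∪ E) :=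
        hD.1.union (hUcl.diff (isClopen_biUnion_finset fun w _ => himgclopen w D hD.1))
      have hD'C : D ∪ E ⊆ C := Set.union_subset hD.2.1 fun y hy => hUC hy.1
      have hD'sep : ∀ y ∈ D ∪ E, ∀ z ∈ D ∪ E, ∀ w ∈ W', φ w y ≠ z := by
        rintro y (hy | hy) z (hz | hz) w hw hcon
        · exact hD.2.2 y hy z hz w hw hcon
        · -- y ∈ D, z ∈ E : z = φ w y ∈ φ w '' D, excluded from E
          exact hz.2 (Set.mem_biUnion hw ⟨y, hy, hcon⟩)
        · -- y ∈ E, z ∈ D : y = φ (-w) z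
          have hyeq : φ (-w) z = y := by rw [← hcon, hinv]
          have hnw : -w ∈ W' := by
            rw [hW'mem]
            rw [hW'mem] at hw
            exact ⟨neg_ne_zero.2 hw.1, by rw [zdist_zero_neg]; exact hw.2⟩
          exact hy.2 (Set.mem_biUnion hnw ⟨z, hz, hyeq⟩)
        · exact hUsp y hy.1 z hz.1 w hw hcon
      have hfold : (U :: L).foldl step D = L.foldl step (D ∪ E) := rfl
      obtain ⟨hG, hsub, hcov⟩ := ih (D ∪ E) ⟨hD'clopen, hD'C, hD'sep⟩
        (fun U' hU' => hL U' (List.mem_cons_of_mem _ hU'))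
      rw [hfold]
      refine ⟨hG, Set.subset_union_left.trans hsub, ?_⟩
      intro U'' hU''
      rcases List.mem_cons.1 hU'' with h | h
      · subst h
        intro y hy
        by_cases hmem : y ∈ ⋃ w ∈ W', φ w '' D
        · obtain ⟨w, hw, hmem'⟩ := Set.mem_iUnion₂.1 hmem
          obtain ⟨z, hz, hzy⟩ := hmem'
          exact ⟨w, z, ((hW'mem w).1 hw).2, hsub (Or.inl hz), hzy⟩
        · exact ⟨0, y, by rw [hzdist00]; exact le_of_lt hM0,
            hsub (Or.inr ⟨hy, hmem⟩), hid y⟩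
      · exact hcov U'' h
  -- assemble
  set L : List (Set X) := T.toList.map V with hLdef
  set D₀ : Set X := V ⟨x₀, hx₀⟩ with hD₀
  have hD₀props : IsClopen D₀ ∧ D₀ ⊆ C ∧ ∀ y ∈ D₀, ∀ z ∈ D₀, ∀ w ∈ W', φ w y ≠ z :=
    ⟨hUclopen _ _, hUsub _ _, hUsep _ _⟩
  have hLprops : ∀ U ∈ L, IsClopen U ∧ U ⊆ C ∧ ∀ y ∈ U, ∀ z ∈ U, ∀ w ∈ W', φ w y ≠ z := by
    intro U hU
    obtain ⟨t, _, rfl⟩ := List.mem_map.1 hU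
    exact ⟨hUclopen _ _, hUsub _ _, hUsep _ _⟩
  obtain ⟨⟨hDcl, hDC, hDsep⟩, hD₀sub, hDcov⟩ := key L D₀ hD₀props hLprops
  set D : Set X := L.foldl step D₀ with hDdef
  refine ⟨D, hDcl, hDC, hD₀sub (hUmem x₀ hx₀), ?_⟩
  intro x
  constructor
  · -- separation
    intro v w hv hw hvw
    by_contra hle
    push_neg at hle
    have hu : v - w ∈ W' := by
      rw [hW'mem]
      refine ⟨sub_ne_zero.2 hvw, ?_⟩
      rw [zdist_zero_sub]
      exact hle
    have heq : φ (v - w) (φ w x) = φ v x := by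
      rw [← hadd, sub_add_cancel]
    exact hDsep (φ w x) hw (φ v x) hv (v - w) hu heq
  · -- syndeticity
    intro p
    obtain ⟨v, hvC, hvd⟩ := hsynd x p
    have hvcov : φ v x ∈ ⋃ t ∈ T, V t := hT hvC
    obtain ⟨t, htT, htv⟩ := Set.mem_iUnion₂.1 hvcov
    have hVL : V t ∈ L := List.mem_map.2 ⟨t, Finset.mem_toList.2 htT, rfl⟩
    obtain ⟨w, z, hwM, hzD, hzw⟩ := hDcov (V t) hVL (φ v x) htv
    have hz' : φ (-w + v) x = z := by
      rw [hadd, ← hzw, hinv]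
    refine ⟨-w + v, hz' ▸ hzD, ?_⟩
    calc zdistR p (-w + v) ≤ zdistR p v + zdist v (-w + v) := zdistR_triangle p v _
      _ < 2 * M := by
          have h1 : zdist v (-w + v) = zdist 0 w := by
            have : -w + v = v - w := by ring
            rw [this, zdist_self_sub]
          rw [h1]
          have h2 : K + Real.sqrt d + 1 < M := hM
          linarith
end

section
/- Let (X, φ, ℤ^d) be a minimal Cantor system, and define G(φ) = C(X,ℤ)/B(φ) where B(φ) is the subgroup generated by functions 1_A − 1_{φ^v A} for clopen A ⊂ X, v ∈ ℤ^d, and G(φ)_+ = {[f] : f ≥ 0}. Then (G(φ), G(φ)_+) is an ordered abelian group: G(φ)_+ + G(φ)_+ ⊆ G(φ)_+, G(φ)_+ − G(φ)_+ = G(φ), and G(φ)_+ ∩ (−G(φ)_+) = {0}. -/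
/-- The subgroup `B(φ) ⊆ C(X, ℤ)` of `φ`-coboundaries, generated by the functions
`g - g ∘ φ^v` (equivalently by `1_A - 1_{φ^v A}` for clopen `A`). -/
def cobSubgroup {d : ℕ} {X : Type*} [TopologicalSpace X]
    (φ : (Fin d → ℤ) → X ≃ₜ X) : AddSubgroup C(X, ℤ) :=
  AddSubgroup.closure
    {f | ∃ (g : C(X, ℤ)) (v : Fin d → ℤ), f = g - g.comp ⟨⇑(φ v), (φ v).continuous⟩}

/-- The positive cone `G(φ)₊` of the dynamical cohomology group
`G(φ) = C(X, ℤ) / B(φ)`: classes of pointwise nonnegative functions. -/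
def posCone {d : ℕ} {X : Type*} [TopologicalSpace X] (φ : (Fin d → ℤ) → X ≃ₜ X) :
    Set (C(X, ℤ) ⧸ cobSubgroup φ) :=
  {a | ∃ f : C(X, ℤ), (∀ x, 0 ≤ f x) ∧
    (QuotientAddGroup.mk f : C(X, ℤ) ⧸ cobSubgroup φ) = a}

namespace Stmt12Aux

open Finset

/-- The box `[0,N)^d` in `ℤ^d`. -/
noncomputable def box (d N : ℕ) : Finset (Fin d → ℤ) := Fintype.piFinset fun _ => Finset.Ico 0 (N : ℤ)

lemma mem_box {d N : ℕ} {u : Fin d → ℤ} : u ∈ box d N ↔ ∀ i, 0 ≤ u i ∧ u i < N := by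
  simp [box, Fintype.mem_piFinset]

lemma card_box (d N : ℕ) : (box d N).card = N ^ d := by
  simp [box, Fintype.card_piFinset, Int.card_Ico]

lemma card_box_sdiff (d N : ℕ) (v : Fin d → ℤ) :
    ((box d N) \ ((box d N).image (v + ·))).card ≤ (∑ i, (v i).natAbs) * N ^ (d - 1) := by
  classical
  set D : Fin d → Finset ℤ := fun i => Finset.Ico (0:ℤ) N \ Finset.Ico (v i) (N + v i) with hD
  set slab : Fin d → Finset (Fin d → ℤ) :=
    fun i => Fintype.piFinset (fun j => if j = i then D i else Finset.Ico (0:ℤ) N) with hslab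
  have hsub : (box d N) \ ((box d N).image (v + ·)) ⊆ Finset.univ.biUnion slab := by
    intro u hu
    rw [Finset.mem_sdiff] at hu
    obtain ⟨hu1, hu2⟩ := hu
    have hbad : ∃ i, ¬ (v i ≤ u i ∧ u i < N + v i) := by
      by_contra hc
      push_neg at hc
      apply hu2
      rw [Finset.mem_image]
      refine ⟨u - v, ?_, by ring⟩
      rw [mem_box] at hu1 ⊢
      intro i
      have := hc i
      have := hu1 i
      constructor <;> [skip; skip] <;> simp [Pi.sub_apply] <;> omega
    obtain ⟨i, hi⟩ := hbad
    rw [Finset.mem_biUnion]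
    refine ⟨i, Finset.mem_univ i, ?_⟩
    rw [hslab, Fintype.mem_piFinset]
    intro j
    by_cases hji : j = i
    · subst hji
      rw [if_pos rfl]
      simp only [hD, Finset.mem_sdiff, Finset.mem_Ico]
      rw [mem_box] at hu1
      exact ⟨⟨(hu1 j).1, (hu1 j).2⟩, fun hc => hi ⟨hc.1, hc.2⟩⟩
    · rw [if_neg hji, Finset.mem_Ico]
      rw [mem_box] at hu1
      exact ⟨(hu1 j).1, (hu1 j).2⟩
  calc ((box d N) \ ((box d N).image (v + ·))).card
      ≤ (Finset.univ.biUnion slab).card := Finset.card_le_card hsub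
    _ ≤ ∑ i, (slab i).card := Finset.card_biUnion_le
    _ ≤ ∑ i, (v i).natAbs * N ^ (d - 1) := by
        apply Finset.sum_le_sum
        intro i _
        have hcard : (slab i).card = (D i).card * N ^ (d - 1) := by
          rw [hslab]
          rw [Fintype.card_piFinset]
          rw [← Finset.mul_prod_erase Finset.univ _ (Finset.mem_univ i)]
          rw [if_pos rfl]
          congr 1
          calc ∏ j ∈ Finset.univ.erase i,
                ((if j = i then D i else Finset.Ico (0:ℤ) N).card)
              = ∏ _j ∈ Finset.univ.erase i, N := by
                apply Finset.prod_congr rfl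
                intro j hj
                rw [if_neg (Finset.mem_erase.mp hj).1, Int.card_Ico]
                simp
            _ = N ^ (d - 1) := by
                rw [Finset.prod_const, Finset.card_erase_of_mem (Finset.mem_univ i),
                  Finset.card_univ, Fintype.card_fin]
        rw [hcard]
        apply Nat.mul_le_mul_right
        -- (D i).card ≤ (v i).natAbs
        have h1 : (D i).card + ((Finset.Ico (0:ℤ) N) ∩ Finset.Ico (v i) (N + v i)).card
            = (Finset.Ico (0:ℤ) N).card := Finset.card_sdiff_add_card_inter _ _
        rw [Finset.Ico_inter_Ico] at h1
        rw [Int.card_Ico] at h1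
        rw [Int.card_Ico] at h1
        omega
    _ = (∑ i, (v i).natAbs) * N ^ (d - 1) := by rw [Finset.sum_mul]


lemma abs_sum_sub_sum {α : Type*} [DecidableEq α] (s t : Finset α) (F : α → ℤ) (M : ℤ)
    (hM : ∀ u, |F u| ≤ M) :
    |∑ u ∈ s, F u - ∑ u ∈ t, F u| ≤ M * (s \ t).card + M * (t \ s).card := by
  have h1 : ∑ u ∈ s, F u = ∑ u ∈ s ∩ t, F u + ∑ u ∈ s \ t, F u :=
    (Finset.sum_inter_add_sum_sdiff s t F).symm
  have h2 : ∑ u ∈ t, F u = ∑ u ∈ s ∩ t, F u + ∑ u ∈ t \ s, F u := by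
    rw [Finset.inter_comm]; exact (Finset.sum_inter_add_sum_sdiff t s F).symm
  have hb : ∀ r : Finset α, |∑ u ∈ r, F u| ≤ M * r.card := by
    intro r
    calc |∑ u ∈ r, F u| ≤ ∑ u ∈ r, |F u| := Finset.abs_sum_le_sum_abs _ _
      _ ≤ r.card • M := Finset.sum_le_card_nsmul _ _ _ (fun u _ => hM u)
      _ = M * r.card := by rw [nsmul_eq_mul]; ring
  calc |∑ u ∈ s, F u - ∑ u ∈ t, F u|
      = |(∑ u ∈ s \ t, F u) - (∑ u ∈ t \ s, F u)| := by rw [h1, h2]; ring_nf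
    _ ≤ |∑ u ∈ s \ t, F u| + |∑ u ∈ t \ s, F u| := abs_sub _ _
    _ ≤ _ := add_le_add (hb _) (hb _)

lemma card_sdiff_comm {α : Type*} [DecidableEq α] {s t : Finset α} (h : s.card = t.card) :
    (s \ t).card = (t \ s).card := by
  have h1 := Finset.card_sdiff_add_card_inter s t
  have h2 := Finset.card_sdiff_add_card_inter t s
  rw [Finset.inter_comm] at h2
  omega


theorem nonneg_cob_eq_zero {d : ℕ} {X : Type*} [TopologicalSpace X] [CompactSpace X]
    (φ : (Fin d → ℤ) → X ≃ₜ X)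
    (hφadd : ∀ v w x, φ (v + w) x = φ v (φ w x))
    (hφmin : ∀ x : X, Dense {y | ∃ v, φ v x = y})
    (h : C(X, ℤ)) (hmem : h ∈ cobSubgroup φ) (hpos : ∀ x, 0 ≤ h x) : h = 0 := by
  classical
  by_contra hne
  obtain ⟨x₀, hx₀⟩ : ∃ x, 1 ≤ h x := by
    by_contra hc
    push_neg at hc
    apply hne
    ext x
    have h1 := hpos x
    have h2 := hc x
    simp only [ContinuousMap.zero_apply]
    omega
  rcases Nat.eq_zero_or_pos d with hd | hd
  · subst hd
    have hid : ∀ x : X, φ 0 x = x := by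
      intro x
      have h0 := hφadd 0 0 x
      rw [add_zero] at h0
      exact ((φ 0).injective h0).symm
    have hle : cobSubgroup φ ≤ ⊥ := by
      rw [cobSubgroup, AddSubgroup.closure_le]
      rintro f ⟨g, v, rfl⟩
      simp only [SetLike.mem_coe, AddSubgroup.mem_bot]
      ext x
      have h0 : (φ v) x = x := by
        have hv : v = 0 := funext fun i => i.elim0
        rw [hv]; exact hid x
      simp [h0]
    have h0 : h = 0 := by simpa using hle hmem
    rw [h0] at hx₀
    simp at hx₀
  · -- d ≥ 1 : box-counting argument
    have hUopen : IsOpen {x : X | 1 ≤ h x} :=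
      (isOpen_discrete (Set.Ici (1:ℤ))).preimage h.continuous
    have hcov : Set.univ ⊆ ⋃ v : Fin d → ℤ, (φ v) ⁻¹' {x : X | 1 ≤ h x} := by
      intro x _
      obtain ⟨y, ⟨v, hv⟩, hyU⟩ := (hφmin x).exists_mem_open hUopen ⟨x₀, hx₀⟩
      exact Set.mem_iUnion.mpr ⟨v, by rw [Set.mem_preimage, hv]; exact hyU⟩
    obtain ⟨F, hF⟩ := isCompact_univ.elim_finite_subcover _
      (fun v : Fin d → ℤ => hUopen.preimage (φ v).continuous) hcov
    obtain ⟨R, hRb⟩ : ∃ R : ℕ, ∀ v ∈ F, ∀ i, (v i).natAbs ≤ R :=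
      ⟨F.sup (fun v => Finset.univ.sup fun i => (v i).natAbs), fun v hv i =>
        le_trans (Finset.le_sup (f := fun i => (v i).natAbs) (Finset.mem_univ i))
          (Finset.le_sup (f := fun v => Finset.univ.sup fun i => (v i).natAbs) hv)⟩
    have hselF : ∀ y : X, ∃ v ∈ F, 1 ≤ h (φ v y) := by
      intro y
      have hy := hF (Set.mem_univ y)
      simp only [Set.mem_iUnion, Set.mem_preimage, Set.mem_setOf_eq, exists_prop] at hy
      exact hy
    choose sel hselmem hselU using hselF
    obtain ⟨S, hSz⟩ : ∃ S : ℕ, (S:ℤ) = 2 * (R:ℤ) + 1 := ⟨2 * R + 1, by push_cast; ring⟩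
    -- Lower bound : at least K^d visits to U in the box of side S*K
    have hlow : ∀ K : ℕ, (K : ℤ) ^ d ≤ ∑ u ∈ box d (S * K), h (φ u x₀) := by
      intro K
      obtain ⟨w, hw⟩ : ∃ w : (Fin d → ℤ) → (Fin d → ℤ), ∀ k i, w k i = (S:ℤ) * k i + R :=
        ⟨_, fun _ _ => rfl⟩
      obtain ⟨ef, hef⟩ : ∃ ef : (Fin d → ℤ) → (Fin d → ℤ),
          ∀ k, ef k = sel (φ (w k) x₀) + w k := ⟨_, fun _ => rfl⟩
      have heU : ∀ k, 1 ≤ h (φ (ef k) x₀) := by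
        intro k
        rw [hef]
        have : φ (sel (φ (w k) x₀) + w k) x₀ = φ (sel (φ (w k) x₀)) (φ (w k) x₀) := hφadd _ _ _
        rw [this]
        exact hselU (φ (w k) x₀)
      have hselb : ∀ y i, -(R:ℤ) ≤ sel y i ∧ sel y i ≤ R := by
        intro y i
        have := hRb _ (hselmem y) i
        omega
      have hemem : ∀ k ∈ box d K, ef k ∈ box d (S * K) := by
        intro k hk
        rw [mem_box] at hk ⊢
        intro i
        have hki := hk i
        have hsi := hselb (φ (w k) x₀) i
        have hei : ef k i = sel (φ (w k) x₀) i + ((S:ℤ) * k i + R) := by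
          rw [hef, Pi.add_apply, hw]
        have h1 : 0 ≤ (S:ℤ) * k i := mul_nonneg (by positivity) hki.1
        have h2 : (S:ℤ) * k i ≤ (S:ℤ) * K - S := by
          have := mul_le_mul_of_nonneg_left (show k i ≤ (K:ℤ) - 1 by omega)
            (show (0:ℤ) ≤ S by positivity)
          linarith [this]
        rw [hei]
        push_cast
        constructor
        · linarith [hsi.1, h1]
        · linarith [hsi.2, h2, hSz]
      have hinj : Set.InjOn ef (box d K) := by
        intro k hk k' hk' hkk'
        funext i
        have hcongr : sel (φ (w k) x₀) i + ((S:ℤ) * k i + R)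
            = sel (φ (w k') x₀) i + ((S:ℤ) * k' i + R) := by
          have hcf := congrFun hkk' i
          rwa [hef, hef, Pi.add_apply, Pi.add_apply, hw, hw] at hcf
        have ha := hselb (φ (w k) x₀) i
        have ha' := hselb (φ (w k') x₀) i
        by_contra hne'
        rcases lt_or_gt_of_ne hne' with hlt | hlt
        · have hmul : (S:ℤ) * 1 ≤ (S:ℤ) * (k' i - k i) :=
            mul_le_mul_of_nonneg_left (by omega) (by positivity)
          rw [mul_sub] at hmul
          linarith [hmul, hSz]
        · have hmul : (S:ℤ) * 1 ≤ (S:ℤ) * (k i - k' i) :=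
            mul_le_mul_of_nonneg_left (by omega) (by positivity)
          rw [mul_sub] at hmul
          linarith [hmul, hSz]
      have himg : (box d K).image ef ⊆ box d (S*K) := by
        intro u hu
        rw [Finset.mem_image] at hu
        obtain ⟨k, hk, rfl⟩ := hu
        exact hemem k hk
      calc ((K:ℤ))^d = (((box d K).card : ℕ) : ℤ) := by rw [card_box]; push_cast; ring
        _ = (((box d K).image ef).card : ℤ) := by rw [Finset.card_image_of_injOn hinj]
        _ ≤ ∑ u ∈ (box d K).image ef, h (φ u x₀) := by
            have := Finset.card_nsmul_le_sum ((box d K).image ef) (fun u => h (φ u x₀)) 1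
              (fun u hu => by
                rw [Finset.mem_image] at hu
                obtain ⟨k, hk, rfl⟩ := hu
                exact heU k)
            simpa [nsmul_eq_mul] using this
        _ ≤ ∑ u ∈ box d (S*K), h (φ u x₀) :=
            Finset.sum_le_sum_of_subset_of_nonneg himg (fun u _ _ => hpos _)
    -- Upper bound : coboundary sums grow like N^(d-1)
    have hup : ∃ C : ℤ, 0 ≤ C ∧ ∀ N : ℕ,
        |∑ u ∈ box d N, h (φ u x₀)| ≤ C * (N:ℤ) ^ (d - 1) := by
      refine AddSubgroup.closure_induction ?_ ?_ ?_ ?_ hmem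
      · rintro f ⟨g, v, rfl⟩
        obtain ⟨M, hM0, hM⟩ : ∃ M : ℤ, 0 ≤ M ∧ ∀ y : X, |g y| ≤ M := by
          obtain ⟨y₀, -, hy₀⟩ := isCompact_univ.exists_isMaxOn ⟨x₀, trivial⟩
            g.continuous.abs.continuousOn
          exact ⟨|g y₀|, abs_nonneg _, fun y => hy₀ (Set.mem_univ y)⟩
        refine ⟨2 * M * (∑ i, ((v i).natAbs : ℤ)), by positivity, ?_⟩
        intro N
        have hsum : ∑ u ∈ box d N, (g - g.comp ⟨⇑(φ v), (φ v).continuous⟩) (φ u x₀)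
            = ∑ u ∈ box d N, g (φ u x₀) - ∑ u ∈ (box d N).image (v + ·), g (φ u x₀) := by
          rw [Finset.sum_image (fun a _ b _ hab => add_right_injective v hab)]
          rw [← Finset.sum_sub_distrib]
          apply Finset.sum_congr rfl
          intro u hu
          simp only [ContinuousMap.sub_apply, ContinuousMap.comp_apply, ContinuousMap.coe_mk]
          rw [← hφadd]
        rw [hsum]
        have hb := abs_sum_sub_sum (box d N) ((box d N).image (v + ·))
          (fun u => g (φ u x₀)) M (fun u => hM _)
        have hc2 : ((((box d N).image (v + ·)) \ (box d N)).card : ℤ)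
            = (((box d N) \ ((box d N).image (v + ·))).card : ℤ) := by
          norm_cast
          apply card_sdiff_comm
          rw [Finset.card_image_of_injective _ (add_right_injective v)]
        rw [hc2] at hb
        have hcast : ((((box d N) \ ((box d N).image (v + ·))).card : ℕ) : ℤ)
            ≤ (∑ i, ((v i).natAbs : ℤ)) * (N:ℤ) ^ (d - 1) := by
          have := card_box_sdiff d N v
          calc ((((box d N) \ ((box d N).image (v + ·))).card : ℕ) : ℤ)
              ≤ (((∑ i, (v i).natAbs) * N ^ (d - 1) : ℕ) : ℤ) := by exact_mod_cast this
            _ = (∑ i, ((v i).natAbs : ℤ)) * (N:ℤ) ^ (d - 1) := by push_cast; ring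
        calc |∑ u ∈ box d N, g (φ u x₀) - ∑ u ∈ (box d N).image (v + ·), g (φ u x₀)|
            ≤ M * (((box d N) \ ((box d N).image (v + ·))).card : ℤ)
              + M * (((box d N) \ ((box d N).image (v + ·))).card : ℤ) := hb
          _ = 2 * M * (((box d N) \ ((box d N).image (v + ·))).card : ℤ) := by ring
          _ ≤ 2 * M * ((∑ i, ((v i).natAbs : ℤ)) * (N:ℤ) ^ (d - 1)) :=
              mul_le_mul_of_nonneg_left hcast (by positivity)
          _ = 2 * M * (∑ i, ((v i).natAbs : ℤ)) * (N:ℤ) ^ (d - 1) := by ring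
      · exact ⟨0, le_refl _, fun N => by simp⟩
      · rintro f₁ f₂ h₁ h₂ ⟨C₁, hC₁, hb₁⟩ ⟨C₂, hC₂, hb₂⟩
        refine ⟨C₁ + C₂, by positivity, fun N => ?_⟩
        have hs : ∑ u ∈ box d N, (f₁ + f₂) (φ u x₀)
            = ∑ u ∈ box d N, f₁ (φ u x₀) + ∑ u ∈ box d N, f₂ (φ u x₀) := by
          rw [← Finset.sum_add_distrib]
          rfl
        rw [hs, add_mul]
        exact le_trans (abs_add_le _ _) (add_le_add (hb₁ N) (hb₂ N))
      · rintro f hf ⟨C, hC, hb⟩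
        refine ⟨C, hC, fun N => ?_⟩
        have hs : ∑ u ∈ box d N, (-f) (φ u x₀) = -∑ u ∈ box d N, f (φ u x₀) := by
          rw [← Finset.sum_neg_distrib]
          rfl
        rw [hs, abs_neg]
        exact hb N
    -- Contradiction
    obtain ⟨C, hC0, hCb⟩ := hup
    obtain ⟨e', rfl⟩ : ∃ e', d = e' + 1 := ⟨d - 1, by omega⟩
    obtain ⟨K, hK1, hCS⟩ : ∃ K : ℕ, 1 ≤ K ∧ C * (S:ℤ)^e' < K :=
      ⟨(C * (S:ℤ) ^ e').toNat + 1, Nat.le_add_left 1 _, by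
        push_cast
        linarith [Int.self_le_toNat (C * (S:ℤ)^e')]⟩
    have h1 := hlow K
    have h2 := hCb (S * K)
    have hKz : (1:ℤ) ≤ (K:ℤ) := by exact_mod_cast hK1
    have hKe : (0:ℤ) < (K:ℤ)^e' := by positivity
    have habs : ∑ u ∈ box (e'+1) (S*K), h (φ u x₀) ≤ C * ((S:ℤ)*(K:ℤ))^e' := by
      have h3 := le_trans (le_abs_self _) h2
      have h4 : ((S*K : ℕ) : ℤ) = (S:ℤ)*(K:ℤ) := by push_cast; ring
      rw [Nat.add_sub_cancel, h4] at h3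
      exact h3
    have hfin : (K:ℤ)^(e'+1) ≤ C * (S:ℤ)^e' * (K:ℤ)^e' := by
      calc (K:ℤ)^(e'+1) ≤ C * ((S:ℤ)*(K:ℤ))^e' := le_trans h1 habs
        _ = C * (S:ℤ)^e' * (K:ℤ)^e' := by rw [mul_pow]; ring
    have hpow : (K:ℤ)^(e'+1) = (K:ℤ) * (K:ℤ)^e' := by ring
    have hlt := mul_lt_mul_of_pos_right hCS hKe
    linarith [hfin, hlt, hpow]

end Stmt12Aux

/-- For a minimal (free) Cantor system `(X, φ, ℤ^d)`, the pair
`(G(φ), G(φ)₊)` is an ordered abelian group: the cone is closed under addition,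
every element is a difference of two cone elements, and `G(φ)₊ ∩ (−G(φ)₊) = {0}`. -/
theorem stmt_12 {d : ℕ} {X : Type*} [TopologicalSpace X] [CompactSpace X] [T2Space X]
    [TotallyDisconnectedSpace X] (hXp : Perfect (Set.univ : Set X))
    (φ : (Fin d → ℤ) → X ≃ₜ X)
    (hφadd : ∀ v w x, φ (v + w) x = φ v (φ w x))
    (hφmin : ∀ x : X, Dense {y | ∃ v, φ v x = y})
    (hφfree : ∀ (v) (x : X), φ v x = x → v = 0) :
    (∀ a ∈ posCone φ, ∀ b ∈ posCone φ, a + b ∈ posCone φ) ∧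
    (∀ g : C(X, ℤ) ⧸ cobSubgroup φ, ∃ a ∈ posCone φ, ∃ b ∈ posCone φ, g = a - b) ∧
    (∀ a ∈ posCone φ, -a ∈ posCone φ → a = 0) := by
  classical
  refine ⟨?_, ?_, ?_⟩
  · rintro a ⟨f, hf, rfl⟩ b ⟨g, hg, rfl⟩
    exact ⟨f + g, fun x => add_nonneg (hf x) (hg x), by rw [QuotientAddGroup.mk_add]⟩
  · intro g
    obtain ⟨f, rfl⟩ := QuotientAddGroup.mk_surjective g
    have hcp : Continuous fun x => max (f x) 0 := by
      have he : (fun x => max (f x) 0) = (fun n : ℤ => max n 0) ∘ f := rfl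
      rw [he]
      exact continuous_of_discreteTopology.comp f.continuous
    have hcn : Continuous fun x => max (-f x) 0 := by
      have he : (fun x => max (-f x) 0) = (fun n : ℤ => max (-n) 0) ∘ f := rfl
      rw [he]
      exact continuous_of_discreteTopology.comp f.continuous
    refine ⟨QuotientAddGroup.mk (⟨fun x => max (f x) 0, hcp⟩ : C(X, ℤ)),
      ⟨_, fun x => le_max_right _ _, rfl⟩,
      QuotientAddGroup.mk (⟨fun x => max (-f x) 0, hcn⟩ : C(X, ℤ)),
      ⟨_, fun x => le_max_right _ _, rfl⟩, ?_⟩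
    have hfd : (⟨fun x => max (f x) 0, hcp⟩ : C(X, ℤ)) - ⟨fun x => max (-f x) 0, hcn⟩ = f := by
      ext x
      simp only [ContinuousMap.sub_apply, ContinuousMap.coe_mk]
      omega
    conv_lhs => rw [← hfd]
    rfl
  · rintro a ⟨f, hf, rfl⟩ ⟨g, hg, hgeq⟩
    have hsum : (QuotientAddGroup.mk (f + g) : C(X, ℤ) ⧸ cobSubgroup φ) = 0 := by
      calc (QuotientAddGroup.mk (f + g) : C(X, ℤ) ⧸ cobSubgroup φ)
          = QuotientAddGroup.mk f + QuotientAddGroup.mk g := rfl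
        _ = QuotientAddGroup.mk f + -(QuotientAddGroup.mk f) := by rw [hgeq]
        _ = 0 := add_neg_cancel _
    have hmem : f + g ∈ cobSubgroup φ := (QuotientAddGroup.eq_zero_iff _).mp hsum
    have h0 : f + g = 0 :=
      Stmt12Aux.nonneg_cob_eq_zero φ hφadd hφmin _ hmem
        (fun x => add_nonneg (hf x) (hg x))
    have hf0 : f = 0 := by
      ext x
      have h1 := ContinuousMap.congr_fun h0 x
      have h2 := hf x
      have h3 := hg x
      simp only [ContinuousMap.add_apply, ContinuousMap.zero_apply] at h1 ⊢
      omega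
    rw [hf0]
    rfl
end

section
/- Let (X, φ, ℤ^d) be a minimal Cantor system with dynamical cohomology group (G(φ), G(φ)_+). Then (G(φ), G(φ)_+) is simple: for every [f] ∈ G(φ)_+ \ {0} and every [g] ∈ G(φ), there exists n ∈ ℕ such that n[f] > [g]. -/
open Finset Filter Topology


lemma cob_not_pos {d : ℕ} {X : Type*} [TopologicalSpace X] [CompactSpace X]
    (φ : (Fin d → ℤ) → X ≃ₜ X)
    (hφadd : ∀ v w x, φ (v + w) x = φ v (φ w x))
    (x0 : X) (h : C(X, ℤ)) (hh : ∀ x, 1 ≤ h x) :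
    h ∉ cobSubgroup φ := by
  classical
  haveI : Nonempty X := ⟨x0⟩
  set B : ℕ → Finset (Fin d → ℤ) := fun N => Fintype.piFinset (fun _ => Finset.Ico (0:ℤ) (N:ℤ)) with hBdef
  set S : ℕ → C(X,ℤ) → ℤ := fun N f => ∑ w ∈ B N, f (φ w x0) with hSdef
  have hcardB : ∀ N, (B N).card = N ^ d := by
    intro N
    simp [hBdef, Fintype.card_piFinset, Int.card_Ico]
  have hSadd : ∀ N f₁ f₂, S N (f₁ + f₂) = S N f₁ + S N f₂ := by
    intro N f₁ f₂
    simp [hSdef, Finset.sum_add_distrib]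
  have hSneg : ∀ N f, S N (-f) = - S N f := by
    intro N f
    simp [hSdef]
  intro hmem
  have key : Tendsto (fun N : ℕ => (S N h : ℝ) / (N:ℝ)^d) atTop (𝓝 0) := by
    refine AddSubgroup.closure_induction
      (p := fun f _ => Tendsto (fun N : ℕ => (S N f : ℝ) / (N:ℝ)^d) atTop (𝓝 0))
      ?_ ?_ ?_ ?_ hmem
    · -- generators
      rintro f ⟨g, v, rfl⟩
      obtain ⟨x, -, hxM⟩ := IsCompact.exists_isMaxOn (isCompact_univ (X := X)) Set.univ_nonempty
        (((continuous_of_discreteTopology : Continuous (fun n : ℤ => |n|)).comp g.continuous).continuousOn)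
      set M : ℤ := |g x| with hMdef
      have hM0 : 0 ≤ M := abs_nonneg _
      have hM : ∀ y, |g y| ≤ M := fun y => hxM (Set.mem_univ y)
      set G : (Fin d → ℤ) → ℤ := fun u => g (φ u x0) with hGdef
      have hGM : ∀ u, |G u| ≤ M := fun u => hM _
      -- the integer estimate
      have hest : ∀ N : ℕ, (∀ j, |v j| ≤ (N:ℤ)) →
          |S N (g - g.comp ⟨⇑(φ v), (φ v).continuous⟩)| ≤
            2 * M * ((N:ℤ)^d - ∏ j, ((N:ℤ) - |v j|)) := by
        intro N hNc
        set B' : Finset (Fin d → ℤ) := (B N).map (addLeftEmbedding v) with hB'def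
        have hmemB : ∀ w : Fin d → ℤ, w ∈ B N ↔ ∀ j, 0 ≤ w j ∧ w j < (N:ℤ) := by
          intro w
          simp [hBdef, Fintype.mem_piFinset, Finset.mem_Ico]
        have hmemB' : ∀ w : Fin d → ℤ, w ∈ B' ↔ ∀ j, v j ≤ w j ∧ w j < (N:ℤ) + v j := by
          intro w
          simp only [hB'def, Finset.mem_map, addLeftEmbedding_apply]
          constructor
          · rintro ⟨u, hu, rfl⟩ j
            have hj := (hmemB u).1 hu j
            simp only [Pi.add_apply]
            omega
          · intro hw
            refine ⟨w - v, (hmemB _).2 fun j => ?_, by simp⟩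
            have hj := hw j
            simp only [Pi.sub_apply]
            omega
        have hsplit : S N (g - g.comp ⟨⇑(φ v), (φ v).continuous⟩) =
            (∑ w ∈ B N \ B', G w) - ∑ w ∈ B' \ B N, G w := by
          have e1 : S N (g - g.comp ⟨⇑(φ v), (φ v).continuous⟩) =
              (∑ w ∈ B N, G w) - ∑ w ∈ B', G w := by
            rw [hB'def, Finset.sum_map]
            rw [hSdef]
            simp only [ContinuousMap.sub_apply, ContinuousMap.comp_apply, ContinuousMap.coe_mk,
              addLeftEmbedding_apply, Finset.sum_sub_distrib]
            congr 1
            refine Finset.sum_congr rfl fun w _ => ?_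
            rw [hGdef]
            simp only
            rw [← hφadd v w x0]
          rw [e1, ← Finset.sum_inter_add_sum_sdiff (B N) B' G,
            ← Finset.sum_inter_add_sum_sdiff B' (B N) G, Finset.inter_comm B' (B N)]
          ring
        -- cardinality estimates
        set C : Finset (Fin d → ℤ) :=
          Fintype.piFinset (fun j => Finset.Ico (max 0 (v j)) ((N:ℤ) + min 0 (v j))) with hCdef
        have hCB : C ⊆ B N ∩ B' := by
          intro w hw
          rw [Finset.mem_inter]
          have hw' : ∀ j, max 0 (v j) ≤ w j ∧ w j < (N:ℤ) + min 0 (v j) := by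
            intro j
            have := Fintype.mem_piFinset.1 hw j
            simpa [Finset.mem_Ico] using this
          constructor
          · refine (hmemB w).2 fun j => ?_
            have hj := hw' j
            omega
          · refine (hmemB' w).2 fun j => ?_
            have hj := hw' j
            omega
        have hcardC : (C.card : ℤ) = ∏ j, ((N:ℤ) - |v j|) := by
          rw [hCdef, Fintype.card_piFinset]
          push_cast
          refine Finset.prod_congr rfl fun j _ => ?_
          rw [Int.card_Ico]
          have h1 := hNc j
          rcases abs_cases (v j) with ⟨h4, h5⟩ | ⟨h4, h5⟩ <;>
            rw [Int.toNat_of_nonneg (by omega)] <;> omega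
        have hcard1 : ((B N \ B').card : ℤ) ≤ (N:ℤ)^d - ∏ j, ((N:ℤ) - |v j|) := by
          have h1 : (B N ∩ B').card + (B N \ B').card = N ^ d := by
            rw [Finset.card_inter_add_card_sdiff, hcardB]
          have h2 : C.card ≤ (B N ∩ B').card := Finset.card_le_card hCB
          have h4 : (B N \ B').card + C.card ≤ N ^ d := by omega
          have h5 : ((B N \ B').card : ℤ) + (C.card : ℤ) ≤ ((N:ℤ))^d := by
            exact_mod_cast h4
          rw [← hcardC]
          linarith
        have hcard2 : ((B' \ B N).card : ℤ) ≤ (N:ℤ)^d - ∏ j, ((N:ℤ) - |v j|) := by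
          have h1 : (B' ∩ B N).card + (B' \ B N).card = N ^ d := by
            rw [Finset.card_inter_add_card_sdiff, hB'def, Finset.card_map, hcardB]
          have h2 : C.card ≤ (B' ∩ B N).card := by
            rw [Finset.inter_comm]; exact Finset.card_le_card hCB
          have h4 : (B' \ B N).card + C.card ≤ N ^ d := by omega
          have h5 : ((B' \ B N).card : ℤ) + (C.card : ℤ) ≤ ((N:ℤ))^d := by
            exact_mod_cast h4
          rw [← hcardC]
          linarith
        have habs1 : |∑ w ∈ B N \ B', G w| ≤ ((B N \ B').card : ℤ) * M := by
          calc |∑ w ∈ B N \ B', G w| ≤ ∑ w ∈ B N \ B', |G w| := Finset.abs_sum_le_sum_abs _ _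
          _ ≤ ((B N \ B').card : ℤ) * M := by
            have := Finset.sum_le_card_nsmul (B N \ B') (fun w => |G w|) M (fun w _ => hGM w)
            simpa [nsmul_eq_mul] using this
        have habs2 : |∑ w ∈ B' \ B N, G w| ≤ ((B' \ B N).card : ℤ) * M := by
          calc |∑ w ∈ B' \ B N, G w| ≤ ∑ w ∈ B' \ B N, |G w| := Finset.abs_sum_le_sum_abs _ _
          _ ≤ ((B' \ B N).card : ℤ) * M := by
            have := Finset.sum_le_card_nsmul (B' \ B N) (fun w => |G w|) M (fun w _ => hGM w)
            simpa [nsmul_eq_mul] using this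
        rw [hsplit]
        have e1 := mul_le_mul_of_nonneg_right hcard1 hM0
        have e2 := mul_le_mul_of_nonneg_right hcard2 hM0
        calc |(∑ w ∈ B N \ B', G w) - ∑ w ∈ B' \ B N, G w|
            ≤ |∑ w ∈ B N \ B', G w| + |∑ w ∈ B' \ B N, G w| := abs_sub _ _
          _ ≤ ((B N \ B').card : ℤ) * M + ((B' \ B N).card : ℤ) * M := add_le_add habs1 habs2
          _ ≤ ((N:ℤ)^d - ∏ j, ((N:ℤ) - |v j|)) * M + ((N:ℤ)^d - ∏ j, ((N:ℤ) - |v j|)) * M :=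
              add_le_add e1 e2
          _ = 2 * M * ((N:ℤ)^d - ∏ j, ((N:ℤ) - |v j|)) := by ring
      -- pass to the real limit
      have hprod : Tendsto (fun N : ℕ => ∏ j : Fin d, (1 - ((|v j| : ℤ) : ℝ)/(N:ℝ))) atTop
          (𝓝 1) := by
        have := tendsto_finset_prod (f := fun (j : Fin d) (N : ℕ) => 1 - ((|v j| : ℤ) : ℝ)/(N:ℝ))
          (x := atTop) (a := fun _ => (1:ℝ)) Finset.univ
          (fun j _ => by
            simpa using tendsto_const_nhds.sub (tendsto_const_div_atTop_nhds_zero_nat ((|v j| : ℤ) : ℝ)))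
        simpa using this
      have hbnd : Tendsto (fun N : ℕ => 2*(M:ℝ)*(1 - ∏ j : Fin d, (1 - ((|v j| : ℤ) : ℝ)/(N:ℝ)))) atTop (𝓝 0) := by
        have h1 := (tendsto_const_nhds (x := (1:ℝ)) (f := atTop (α := ℕ))).sub hprod
        have h2 := h1.const_mul (2*(M:ℝ))
        simpa using h2
      refine squeeze_zero_norm' ?_ hbnd
      filter_upwards [eventually_ge_atTop 1, eventually_ge_atTop (∑ j, (|v j|).toNat)] with N hN1 hNc'
      have hNc : ∀ j, |v j| ≤ (N:ℤ) := by
        intro j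
        have h1 : (|v j|).toNat ≤ ∑ j, (|v j|).toNat :=
          Finset.single_le_sum (f := fun j : Fin d => (|v j|).toNat)
            (fun _ _ => Nat.zero_le _) (Finset.mem_univ j)
        have h2 := abs_nonneg (v j)
        omega
      have hNpos : (0:ℝ) < (N:ℝ)^d := by positivity
      rw [Real.norm_eq_abs, abs_div, abs_of_pos hNpos, div_le_iff₀ hNpos]
      have hcast : |(S N (g - g.comp ⟨⇑(φ v), (φ v).continuous⟩) : ℝ)| ≤
          2*(M:ℝ)*((N:ℝ)^d - ∏ j, ((N:ℝ) - ((|v j| : ℤ):ℝ))) := by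
        have h6 := hest N hNc
        calc |(S N (g - g.comp ⟨⇑(φ v), (φ v).continuous⟩) : ℝ)|
            = ((|S N (g - g.comp ⟨⇑(φ v), (φ v).continuous⟩)| : ℤ) : ℝ) := by
              push_cast; rfl
          _ ≤ ((2 * M * ((N:ℤ)^d - ∏ j, ((N:ℤ) - |v j|)) : ℤ) : ℝ) := by exact_mod_cast h6
          _ = 2*(M:ℝ)*((N:ℝ)^d - ∏ j, ((N:ℝ) - ((|v j| : ℤ):ℝ))) := by push_cast; ring
      refine hcast.trans (le_of_eq ?_)
      have hNne : (N:ℝ) ≠ 0 := by positivity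
      have e : ∏ j : Fin d, (1 - ((|v j| : ℤ):ℝ)/(N:ℝ)) =
          (∏ j, ((N:ℝ) - ((|v j| : ℤ):ℝ))) / (N:ℝ)^d := by
        have e1 : ∀ j : Fin d, (1 - ((|v j| : ℤ):ℝ)/(N:ℝ)) =
            ((N:ℝ) - ((|v j| : ℤ):ℝ))/(N:ℝ) := by
          intro j; field_simp
        rw [Finset.prod_congr rfl fun j _ => e1 j, Finset.prod_div_distrib,
          Finset.prod_const, Finset.card_univ, Fintype.card_fin]
      rw [e]
      field_simp
    · simpa [hSdef] using tendsto_const_nhds (x := (0:ℝ)) (f := atTop (α := ℕ))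
    · intro f₁ f₂ _ _ h1 h2
      have h3 := h1.add h2
      rw [add_zero] at h3
      simp only [hSadd, Int.cast_add, add_div]
      exact h3
    · intro f _ h1
      have h3 := h1.neg
      rw [neg_zero] at h3
      simp only [hSneg, Int.cast_neg, neg_div]
      exact h3
  -- lower bound contradiction
  have hlow : ∀ N : ℕ, 1 ≤ N → (1:ℝ) ≤ (S N h : ℝ) / (N:ℝ)^d := by
    intro N hN
    have hNpos : (0:ℝ) < (N:ℝ)^d := by positivity
    rw [le_div_iff₀ hNpos, one_mul]
    have h2 : ((N:ℤ))^d ≤ S N h := by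
      have h3 := Finset.card_nsmul_le_sum (B N) (fun w => h (φ w x0)) 1 (fun w _ => hh _)
      rw [hcardB N] at h3
      push_cast [nsmul_eq_mul] at h3
      simpa [hSdef] using h3
    exact_mod_cast h2
  have hev := key.eventually_lt_const (by norm_num : (0:ℝ) < 1)
  obtain ⟨N, hN1, hN2⟩ := ((eventually_ge_atTop 1).and hev).exists
  exact absurd (hlow N hN1) (not_le.2 hN2)

lemma comp_mem_ker {d : ℕ} {X : Type*} [TopologicalSpace X]
    (φ : (Fin d → ℤ) → X ≃ₜ X) (f : C(X, ℤ)) (v : Fin d → ℤ) :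
    (QuotientAddGroup.mk (f.comp ⟨⇑(φ v), (φ v).continuous⟩) : C(X, ℤ) ⧸ cobSubgroup φ) =
      QuotientAddGroup.mk f := by
  rw [QuotientAddGroup.eq]
  have : -(f.comp ⟨⇑(φ v), (φ v).continuous⟩) + f = f - f.comp ⟨⇑(φ v), (φ v).continuous⟩ := by
    abel
  rw [this]
  exact AddSubgroup.subset_closure ⟨f, v, rfl⟩

/-- The dynamical cohomology group `(G(φ), G(φ)₊)` of a minimal (free)
Cantor system is simple: for every `[f] ∈ G(φ)₊ \ {0}` and every `[g] ∈ G(φ)` there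
exists `n ∈ ℕ` with `n[f] > [g]`. -/
theorem stmt_14 {d : ℕ} {X : Type*} [TopologicalSpace X] [CompactSpace X] [T2Space X]
    [TotallyDisconnectedSpace X] (hXp : Perfect (Set.univ : Set X))
    (φ : (Fin d → ℤ) → X ≃ₜ X)
    (hφadd : ∀ v w x, φ (v + w) x = φ v (φ w x))
    (hφmin : ∀ x : X, Dense {y | ∃ v, φ v x = y})
    (hφfree : ∀ (v) (x : X), φ v x = x → v = 0)
    (a : C(X, ℤ) ⧸ cobSubgroup φ) (ha : a ∈ posCone φ) (hane : a ≠ 0)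
    (g : C(X, ℤ) ⧸ cobSubgroup φ) :
    ∃ n : ℕ, n • a - g ∈ posCone φ ∧ n • a ≠ g := by
  classical
  rcases isEmpty_or_nonempty X with hX | hX
  · haveI : Subsingleton C(X, ℤ) := ⟨fun f₁ f₂ => ContinuousMap.ext fun x => hX.elim x⟩
    haveI : Subsingleton (C(X, ℤ) ⧸ cobSubgroup φ) := Quotient.instSubsingletonQuotient _
    exact absurd (Subsingleton.elim a 0) hane
  obtain ⟨f, hf0, rfl⟩ := ha
  -- f is not a coboundary, hence nonzero somewhere
  have hfne : f ∉ cobSubgroup φ := by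
    intro hc
    exact hane ((QuotientAddGroup.eq_zero_iff f).2 hc)
  have hx0 : ∃ x0 : X, 1 ≤ f x0 := by
    by_contra hcon
    push_neg at hcon
    have : f = 0 := ContinuousMap.ext fun x => by
      have h := hcon x
      have h2 := hf0 x
      simp only [ContinuousMap.zero_apply]
      omega
    exact hfne (this ▸ (cobSubgroup φ).zero_mem)
  obtain ⟨x0, hx0⟩ := hx0
  -- the clopen set where f ≥ 1, and a finite cover by preimages
  set A : Set X := {x | 1 ≤ f x} with hAdef
  have hAopen : IsOpen A := by
    have : A = f ⁻¹' {n : ℤ | 1 ≤ n} := rfl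
    rw [this]
    exact (isOpen_discrete _).preimage f.continuous
  have hAne : A.Nonempty := ⟨x0, hx0⟩
  have hcov : (Set.univ : Set X) ⊆ ⋃ v : Fin d → ℤ, (fun x => φ v x) ⁻¹' A := by
    intro x _
    obtain ⟨y, ⟨v, rfl⟩, hyA⟩ := (hφmin x).exists_mem_open hAopen hAne
    exact Set.mem_iUnion.mpr ⟨v, hyA⟩
  obtain ⟨t, ht⟩ := isCompact_univ.elim_finite_subcover _
    (fun v : Fin d → ℤ => hAopen.preimage (φ v).continuous) hcov
  have hcover : ∀ x : X, ∃ v ∈ t, 1 ≤ f (φ v x) := by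
    intro x
    have := ht (Set.mem_univ x)
    simpa [hAdef] using this
  -- F = sum of translated copies of f
  set F : C(X, ℤ) := ∑ v ∈ t, f.comp ⟨⇑(φ v), (φ v).continuous⟩ with hFdef
  have hF1 : ∀ x, 1 ≤ F x := by
    intro x
    obtain ⟨v, hv, hv1⟩ := hcover x
    have hFx : F x = ∑ v ∈ t, f (φ v x) := by
      rw [hFdef]
      simp
    rw [hFx]
    exact hv1.trans (Finset.single_le_sum (f := fun v => f (φ v x))
      (fun w _ => hf0 _) hv)
  have hFq : (QuotientAddGroup.mk F : C(X, ℤ) ⧸ cobSubgroup φ) =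
      t.card • QuotientAddGroup.mk f := by
    have : (QuotientAddGroup.mk' (cobSubgroup φ)) F =
        ∑ v ∈ t, (QuotientAddGroup.mk' (cobSubgroup φ)) (f.comp ⟨⇑(φ v), (φ v).continuous⟩) := by
      rw [hFdef]; exact map_sum _ _ _
    rw [show (QuotientAddGroup.mk F : C(X, ℤ) ⧸ cobSubgroup φ) =
      (QuotientAddGroup.mk' (cobSubgroup φ)) F from rfl, this]
    have h2 : ∀ v ∈ t, (QuotientAddGroup.mk' (cobSubgroup φ)) (f.comp ⟨⇑(φ v), (φ v).continuous⟩)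
        = (QuotientAddGroup.mk' (cobSubgroup φ)) f := fun v _ => comp_mem_ker φ f v
    rw [Finset.sum_congr rfl h2, Finset.sum_const]
    rfl
  -- representative of g and its bound
  obtain ⟨gr, rfl⟩ := QuotientAddGroup.mk'_surjective (cobSubgroup φ) g
  obtain ⟨y, -, hyM⟩ := IsCompact.exists_isMaxOn (isCompact_univ (X := X)) Set.univ_nonempty
    (((continuous_of_discreteTopology : Continuous (fun n : ℤ => |n|)).comp gr.continuous).continuousOn)
  set M : ℕ := (|gr y|).toNat with hMdef
  have hMb : ∀ z, gr z ≤ (M : ℤ) := by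
    intro z
    have h1 : |gr z| ≤ |gr y| := hyM (Set.mem_univ z)
    have h2 := le_abs_self (gr z)
    have h3 := abs_nonneg (gr y)
    omega
  refine ⟨(M + 1) * t.card, ?_, ?_⟩
  · -- positivity
    refine ⟨(M + 1) • F - gr, fun x => ?_, ?_⟩
    · have h1 : ((M + 1) • F - gr) x = (M + 1 : ℤ) * F x - gr x := by
        simp [nsmul_eq_mul]
      rw [h1]
      have h2 := hF1 x
      have h3 := hMb x
      nlinarith
    · have : (QuotientAddGroup.mk ((M + 1) • F - gr) : C(X, ℤ) ⧸ cobSubgroup φ) =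
          (M + 1) • (QuotientAddGroup.mk F : C(X, ℤ) ⧸ cobSubgroup φ) -
            QuotientAddGroup.mk gr := by
        rw [show ∀ u : C(X,ℤ), (QuotientAddGroup.mk u : C(X, ℤ) ⧸ cobSubgroup φ) =
          (QuotientAddGroup.mk' (cobSubgroup φ)) u from fun _ => rfl]
        rw [map_sub, map_nsmul]
        rfl
      rw [this, hFq, smul_smul]
      rfl
  · -- nonequality
    intro heq
    have hker : ((M + 1) • F - gr) ∈ cobSubgroup φ := by
      rw [← QuotientAddGroup.eq_zero_iff]
      have : (QuotientAddGroup.mk ((M + 1) • F - gr) : C(X, ℤ) ⧸ cobSubgroup φ) =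
          (M + 1) • (QuotientAddGroup.mk F : C(X, ℤ) ⧸ cobSubgroup φ) -
            QuotientAddGroup.mk gr := by
        rw [show ∀ u : C(X,ℤ), (QuotientAddGroup.mk u : C(X, ℤ) ⧸ cobSubgroup φ) =
          (QuotientAddGroup.mk' (cobSubgroup φ)) u from fun _ => rfl]
        rw [map_sub, map_nsmul]
        rfl
      rw [this, hFq, smul_smul]
      exact sub_eq_zero.mpr heq
    refine cob_not_pos φ hφadd x0 ((M + 1) • F - gr) (fun x => ?_) hker
    have h1 : ((M + 1) • F - gr) x = (M + 1 : ℤ) * F x - gr x := by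
      simp [nsmul_eq_mul]
    rw [h1]
    have h2 := hF1 x
    have h3 := hMb x
    nlinarith
end

section
/- Let (X, φ, ℤ^d) be a minimal Cantor system, and let P = {φ^w C_k : w ∈ P_k, 1 ≤ k ≤ K} be a clopen partition of X where C_k ⊂ X are clopen and P_k ⊂ ℤ^d are finite. Then for any h ∈ C(X,ℤ), the function ĥ(x) = Σ_{k=1}^K Σ_{w∈P_k} 1_{C_k}(x)·h(φ^w(x)) satisfies h − ĥ ∈ B(φ), the group of φ-coboundaries. -/
/-- Let `(X, φ, ℤ^d)` be a minimal Cantor system and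
`P = {φ^w C_k : w ∈ P_k, 1 ≤ k ≤ K}` a clopen partition of `X`. Then for any
`h ∈ C(X, ℤ)`, the function `hh(x) = Σ_k Σ_{w ∈ P_k} 1_{C_k}(x) · h(φ^w(x))` satisfies
`h − hh ∈ B(φ)`. -/
theorem stmt_15 {d : ℕ} {X : Type*} [TopologicalSpace X] [CompactSpace X] [T2Space X]
    [TotallyDisconnectedSpace X] (hXp : Perfect (Set.univ : Set X))
    (φ : (Fin d → ℤ) → X ≃ₜ X)
    (hφadd : ∀ v w x, φ (v + w) x = φ v (φ w x))
    (hφmin : ∀ x : X, Dense {y | ∃ v, φ v x = y})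
    (K : ℕ) (C : Fin K → Set X) (hC : ∀ k, IsClopen (C k))
    (P : Fin K → Finset (Fin d → ℤ))
    (hdisj : ∀ (k k' : Fin K) (w w' : Fin d → ℤ), w ∈ P k → w' ∈ P k' →
      (k, w) ≠ (k', w') → Disjoint ((φ w) '' C k) ((φ w') '' C k'))
    (hcover : (⋃ k, ⋃ w ∈ P k, (φ w) '' C k) = Set.univ)
    (h hh : C(X, ℤ))
    (hhh : ∀ x, hh x = ∑ k, ∑ w ∈ P k, Set.indicator (C k) (fun y => h (φ w y)) x) :
    h - hh ∈ cobSubgroup φ := by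
  -- clopenness of images
  have himg : ∀ (k : Fin K) (w : Fin d → ℤ), IsClopen ((φ w) '' C k) := by
    intro k w
    have : (φ w) '' C k = ⇑(φ w).symm ⁻¹' C k := by
      ext x
      exact ⟨fun ⟨a, ha, he⟩ => by simpa [← he] using ha,
        fun hx => ⟨(φ w).symm x, hx, by simp⟩⟩
    rw [this]
    exact (hC k).preimage (φ w).symm.continuous
  -- the functions g k w = 1_{φ^w C_k} ⬝ h
  have gcont : ∀ (k : Fin K) (w : Fin d → ℤ),
      Continuous (Set.indicator ((φ w) '' C k) ⇑h) := by
    intro k w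
    refine h.continuous.indicator ?_
    intro a ha
    rw [(himg k w).frontier_eq] at ha
    exact absurd ha (Set.notMem_empty a)
  set g : Fin K → (Fin d → ℤ) → C(X, ℤ) :=
    fun k w => ⟨Set.indicator ((φ w) '' C k) ⇑h, gcont k w⟩ with hg
  -- the sum of generators
  have hmem : (∑ k, ∑ w ∈ P k,
      (g k w - (g k w).comp ⟨⇑(φ w), (φ w).continuous⟩)) ∈ cobSubgroup φ := by
    refine AddSubgroup.sum_mem _ (fun k _ => AddSubgroup.sum_mem _ (fun w _ => ?_))
    exact AddSubgroup.subset_closure ⟨g k w, w, rfl⟩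
  have key : h - hh = ∑ k, ∑ w ∈ P k,
      (g k w - (g k w).comp ⟨⇑(φ w), (φ w).continuous⟩) := by
    ext x
    have hx : x ∈ (⋃ k, ⋃ w ∈ P k, (φ w) '' C k) := hcover ▸ Set.mem_univ x
    simp only [Set.mem_iUnion] at hx
    obtain ⟨k0, w0, hw0, hx0⟩ := hx
    have hsum1 : (∑ k, ∑ w ∈ P k, Set.indicator ((φ w) '' C k) ⇑h x) = h x := by
      rw [Finset.sum_eq_single k0]
      · rw [Finset.sum_eq_single w0]
        · simp [Set.indicator_of_mem hx0]
        · intro w hw hne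
          apply Set.indicator_of_notMem
          intro hxw
          exact Set.disjoint_left.mp
            (hdisj k0 k0 w w0 hw hw0 (by simp [hne])) hxw hx0
        · intro hk0; exact absurd hw0 hk0
      · intro k _ hne
        apply Finset.sum_eq_zero
        intro w hw
        apply Set.indicator_of_notMem
        intro hxw
        exact Set.disjoint_left.mp
          (hdisj k k0 w w0 hw hw0 (by simp [hne])) hxw hx0
      · simp
    have hcomp : ∀ (k : Fin K) (w : Fin d → ℤ),
        Set.indicator ((φ w) '' C k) ⇑h (φ w x)
          = Set.indicator (C k) (fun y => h (φ w y)) x := by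
      intro k w
      by_cases hxk : x ∈ C k
      · rw [Set.indicator_of_mem hxk, Set.indicator_of_mem (Set.mem_image_of_mem _ hxk)]
      · rw [Set.indicator_of_notMem hxk, Set.indicator_of_notMem]
        intro hmem'
        exact hxk ((φ w).injective.mem_set_image.mp hmem')
    simp only [ContinuousMap.sub_apply, ContinuousMap.sum_apply, ContinuousMap.comp_apply,
      ContinuousMap.coe_mk, hhh x]
    simp only [hg, ContinuousMap.coe_mk, hcomp, Finset.sum_sub_distrib, hsum1]
  rw [key]; exact hmem
end

section
/- Let (X, φ, ℤ^d) be a minimal Cantor system and f, g ∈ C(X,ℤ). Suppose P = {φ^w C_k : w ∈ P_k, 1 ≤ k ≤ K} is a clopen (Voronoi–Rohlin) partition of X such that for all k and all x ∈ C_k, Σ_{v∈P_k} g(φ^v(x)) ≥ Σ_{v∈P_k} f(φ^v(x)). Then [g] ≥ [f] in (G(φ), G(φ)_+). If moreover the inequality is strict for some k and some x ∈ C_k, then [g] > [f]. -/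
section Aux
variable {d : ℕ} {X : Type*} [TopologicalSpace X]

open Classical in
noncomputable def indC {A : Set X} (hA : IsClopen A) : C(X, ℤ) :=
  ⟨fun x => if x ∈ A then 1 else 0, IsLocallyConstant.continuous (by
    intro s
    by_cases h1 : (1:ℤ) ∈ s <;> by_cases h0 : (0:ℤ) ∈ s
    · have : (fun x => if x ∈ A then (1:ℤ) else 0) ⁻¹' s = Set.univ := by
        ext x; by_cases hx : x ∈ A <;> simp [hx, h1, h0]
      rw [this]; exact isOpen_univ
    · have : (fun x => if x ∈ A then (1:ℤ) else 0) ⁻¹' s = A := by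
        ext x; by_cases hx : x ∈ A <;> simp [hx, h1, h0]
      rw [this]; exact hA.2
    · have : (fun x => if x ∈ A then (1:ℤ) else 0) ⁻¹' s = Aᶜ := by
        ext x; by_cases hx : x ∈ A <;> simp [hx, h1, h0]
      rw [this]; exact hA.1.isOpen_compl
    · have : (fun x => if x ∈ A then (1:ℤ) else 0) ⁻¹' s = ∅ := by
        ext x; by_cases hx : x ∈ A <;> simp [hx, h1, h0]
      rw [this]; exact isOpen_empty)⟩

lemma indC_of_mem {A : Set X} (hA : IsClopen A) {x : X} (hx : x ∈ A) : indC hA x = 1 := by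
  simp [indC, hx]

lemma indC_of_not_mem {A : Set X} (hA : IsClopen A) {x : X} (hx : x ∉ A) : indC hA x = 0 := by
  simp [indC, hx]

def φc (φ : (Fin d → ℤ) → X ≃ₜ X) (v : Fin d → ℤ) : C(X, X) := ⟨⇑(φ v), (φ v).continuous⟩

variable {φ : (Fin d → ℤ) → X ≃ₜ X} (hφadd : ∀ v w x, φ (v + w) x = φ v (φ w x))

include hφadd

lemma phi_zero (x : X) : φ 0 x = x := by
  have h := hφadd 0 0 x
  rw [add_zero] at h
  exact ((φ 0).injective h).symm

lemma phi_comp (v w : Fin d → ℤ) (x : X) : φ v (φ w x) = φ (v + w) x := (hφadd v w x).symm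

omit hφadd in
lemma clopen_image {A : Set X} (hA : IsClopen A) (v : Fin d → ℤ) : IsClopen (φ v '' A) := by
  rw [show φ v '' A = (φ v).symm ⁻¹' A from Equiv.image_eq_preimage_symm (φ v).toEquiv A]
  exact ⟨hA.1.preimage (φ v).symm.continuous, hA.2.preimage (φ v).symm.continuous⟩

lemma mem_image_shift {A : Set X} {v w : Fin d → ℤ} {x : X} :
    φ v x ∈ φ w '' A ↔ x ∈ φ (w - v) '' A := by
  constructor
  · rintro ⟨c, hc, hcx⟩
    refine ⟨c, hc, (φ v).injective ?_⟩
    rw [phi_comp hφadd, show v + (w - v) = w by ring, hcx]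
  · rintro ⟨c, hc, rfl⟩
    exact ⟨c, hc, by rw [phi_comp hφadd, show v + (w - v) = w by ring]⟩

omit hφadd

lemma gen_mem_cob (ψ : C(X, ℤ)) (v : Fin d → ℤ) :
    ψ - ψ.comp (φc φ v) ∈ cobSubgroup φ :=
  AddSubgroup.subset_closure ⟨ψ, v, rfl⟩

lemma exists_abs_bound [CompactSpace X] (g : C(X, ℤ)) : ∃ M : ℤ, 0 ≤ M ∧ ∀ x, |g x| ≤ M := by
  have hc : IsCompact (Set.range fun x => |g x|) :=
    isCompact_range ((continuous_of_discreteTopology (f := fun n : ℤ => |n|)).comp g.continuous)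
  have hf : (Set.range fun x => |g x|).Finite := hc.finite_of_discrete
  obtain ⟨M, hM⟩ := hf.bddAbove
  exact ⟨max M 0, le_max_right _ _, fun x => le_trans (hM ⟨x, rfl⟩) (le_max_left _ _)⟩

end Aux


noncomputable def boxZ (d N : ℕ) : Finset (Fin d → ℤ) := Fintype.piFinset fun _ => Finset.Ico (0:ℤ) (N:ℤ)

lemma card_box (d N : ℕ) : (boxZ d N).card = N ^ d := by
  rw [boxZ, Fintype.card_piFinset]
  simp [Int.card_Ico]

lemma mem_box {d N : ℕ} {u : Fin d → ℤ} : u ∈ boxZ d N ↔ ∀ i, 0 ≤ u i ∧ u i < N := by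
  rw [boxZ, Fintype.mem_piFinset]
  simp [Finset.mem_Ico]

lemma prod_sub_prod_le : ∀ (d : ℕ) (c : Fin d → ℤ) (N : ℤ), 0 ≤ N → (∀ i, 0 ≤ c i) →
    (∀ i, c i ≤ N) → N * (N ^ d - ∏ i, c i) ≤ (∑ i, (N - c i)) * N ^ d := by
  intro d
  induction d with
  | zero => intro c N h0 h1 h2; simp
  | succ n ih =>
    intro c N hN h1 h2
    rw [Fin.prod_univ_succ, Fin.sum_univ_succ, pow_succ]
    have IH := ih (fun i => c i.succ) N hN (fun i => h1 _) (fun i => h2 _)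
    have hprodnn : 0 ≤ ∏ i : Fin n, c i.succ := Finset.prod_nonneg (fun i _ => h1 _)
    have hprod : ∏ i : Fin n, c i.succ ≤ N ^ n := by
      calc ∏ i : Fin n, c i.succ ≤ ∏ _i : Fin n, N :=
            Finset.prod_le_prod (fun i _ => h1 _) (fun i _ => h2 _)
        _ = N ^ n := by simp
    have hc0 : 0 ≤ N - c 0 := sub_nonneg.2 (h2 0)
    nlinarith [mul_le_mul_of_nonneg_left IH hN,
      mul_le_mul_of_nonneg_left (mul_le_mul_of_nonneg_left hprod hc0) hN]

lemma shift_box (d N : ℕ) (v : Fin d → ℤ) :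
    (boxZ d N).image (fun u => v + u)
      = Fintype.piFinset (fun i => Finset.Ico (v i) ((N:ℤ) + v i)) := by
  ext m
  simp only [Finset.mem_image, Fintype.mem_piFinset, Finset.mem_Ico]
  constructor
  · rintro ⟨u, hu, rfl⟩ i
    have := (mem_box.1 hu) i
    simp only [Pi.add_apply]
    omega
  · intro hm
    refine ⟨m - v, mem_box.2 fun i => ?_, by ring⟩
    have := hm i
    simp only [Pi.sub_apply]
    omega

lemma piFinset_inter {d : ℕ} (s t : Fin d → Finset ℤ) :
    Fintype.piFinset s ∩ Fintype.piFinset t = Fintype.piFinset (fun i => s i ∩ t i) := by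
  ext u
  simp [Fintype.mem_piFinset, forall_and]

lemma gen_bound {d : ℕ} {X : Type*} [TopologicalSpace X] [CompactSpace X]
    (φ : (Fin d → ℤ) → X ≃ₜ X) (hφadd : ∀ v w x, φ (v + w) x = φ v (φ w x))
    (g₀ : C(X, ℤ)) (v : Fin d → ℤ) :
    ∃ c : ℤ, 0 ≤ c ∧ ∀ (N : ℕ) (x : X),
      |∑ u ∈ boxZ d N, (g₀ - g₀.comp (φc φ v)) (φ u x)| * N ≤ c * N ^ d := by
  classical
  obtain ⟨M, hM0, hM⟩ := exists_abs_bound g₀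
  refine ⟨2 * M * (∑ i, |v i|), by positivity, fun N x => ?_⟩
  set B := boxZ d N with hB
  set B' := B.image (fun u => v + u) with hB'
  have hsum : ∑ u ∈ B, (g₀ - g₀.comp (φc φ v)) (φ u x)
      = ∑ u ∈ B, g₀ (φ u x) - ∑ m ∈ B', g₀ (φ m x) := by
    rw [Finset.sum_image (fun a _ b _ h => add_left_cancel h)]
    rw [← Finset.sum_sub_distrib]
    refine Finset.sum_congr rfl fun u hu => ?_
    simp [φc, phi_comp hφadd]
  have hdiff : ∑ u ∈ B, g₀ (φ u x) - ∑ m ∈ B', g₀ (φ m x)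
      = ∑ u ∈ B \ B', g₀ (φ u x) - ∑ m ∈ B' \ B, g₀ (φ m x) := by
    have h1 := Finset.sum_sdiff_eq_sub (f := fun u => g₀ (φ u x))
      (Finset.inter_subset_left (s₁ := B) (s₂ := B'))
    have h2 := Finset.sum_sdiff_eq_sub (f := fun u => g₀ (φ u x))
      (Finset.inter_subset_right (s₁ := B) (s₂ := B'))
    rw [Finset.sdiff_inter_self_left] at h1
    rw [Finset.sdiff_inter_self_right] at h2
    rw [h1, h2]; ring
  have habs : |∑ u ∈ B, (g₀ - g₀.comp (φc φ v)) (φ u x)|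
      ≤ M * (B \ B').card + M * (B' \ B).card := by
    rw [hsum, hdiff, sub_eq_add_neg]
    refine (abs_add_le _ _).trans ?_
    rw [abs_neg]
    gcongr ?_ + ?_
    · refine (Finset.abs_sum_le_sum_abs _ _).trans ?_
      calc ∑ u ∈ B \ B', |g₀ (φ u x)| ≤ ∑ u ∈ B \ B', M :=
            Finset.sum_le_sum (fun u _ => hM _)
        _ = M * (B \ B').card := by rw [Finset.sum_const]; ring
    · refine (Finset.abs_sum_le_sum_abs _ _).trans ?_
      calc ∑ u ∈ B' \ B, |g₀ (φ u x)| ≤ ∑ u ∈ B' \ B, M :=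
            Finset.sum_le_sum (fun u _ => hM _)
        _ = M * (B' \ B).card := by rw [Finset.sum_const]; ring
  -- counting
  set ci : Fin d → ℤ := fun i => (((Finset.Ico (0:ℤ) (N:ℤ)) ∩ Finset.Ico (v i) ((N:ℤ) + v i)).card : ℤ)
    with hci
  have hci_card : ∀ i, ci i = ((min (N:ℤ) ((N:ℤ) + v i)) - max 0 (v i)).toNat := by
    intro i
    rw [hci]
    simp only [Finset.Ico_inter_Ico, Int.card_Ico]
  have hci_nonneg : ∀ i, 0 ≤ ci i := fun i => by positivity
  have hci_le : ∀ i, ci i ≤ (N:ℤ) := by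
    intro i; rw [hci_card i]; omega
  have hci_v : ∀ i, (N:ℤ) - ci i ≤ |v i| := by
    intro i
    rw [hci_card i]
    rcases abs_cases (v i) with ⟨h, h'⟩ | ⟨h, h'⟩ <;> rw [h] <;> omega
  have hcardinter : ((B ∩ B').card : ℤ) = ∏ i, ci i := by
    rw [hB', hB, shift_box]
    rw [show boxZ d N = Fintype.piFinset (fun _ : Fin d => Finset.Ico (0:ℤ) (N:ℤ)) from rfl]
    rw [piFinset_inter, Fintype.card_piFinset]
    push_cast
    rfl
  have hprod_le : ∏ i, ci i ≤ (N:ℤ) ^ d := by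
    calc ∏ i, ci i ≤ ∏ _i : Fin d, (N:ℤ) :=
          Finset.prod_le_prod (fun i _ => hci_nonneg i) (fun i _ => hci_le i)
      _ = (N:ℤ) ^ d := by simp
  have hcardB : (B.card : ℤ) = (N:ℤ) ^ d := by rw [hB, card_box]; push_cast; ring
  have hcardB' : B'.card = B.card := Finset.card_image_of_injective _ (add_right_injective v)
  have hinter_le : (B ∩ B').card ≤ B.card := Finset.card_le_card Finset.inter_subset_left
  have hinter_le' : (B ∩ B').card ≤ B'.card := Finset.card_le_card Finset.inter_subset_right
  have hsd1 : ((B \ B').card : ℤ) = (N:ℤ) ^ d - ∏ i, ci i := by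
    have : (B \ B').card = B.card - (B ∩ B').card := by
      rw [← Finset.sdiff_inter_self_left (s := B) (t := B')]
      exact Finset.card_sdiff_of_subset Finset.inter_subset_left
    rw [this, Nat.cast_sub hinter_le, hcardinter, hcardB]
  have hsd2 : ((B' \ B).card : ℤ) = (N:ℤ) ^ d - ∏ i, ci i := by
    have : (B' \ B).card = B'.card - (B ∩ B').card := by
      rw [← Finset.sdiff_inter_self_right (s := B') (t := B)]
      exact Finset.card_sdiff_of_subset Finset.inter_subset_right
    rw [this, Nat.cast_sub hinter_le', hcardinter, hcardB', hcardB]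
  have key := prod_sub_prod_le d ci (N:ℤ) (by positivity) hci_nonneg hci_le
  have hS12 : (∑ i, ((N:ℤ) - ci i)) ≤ ∑ i, |v i| := Finset.sum_le_sum (fun i _ => hci_v i)
  have habs2 : |∑ u ∈ B, (g₀ - g₀.comp (φc φ v)) (φ u x)| ≤ 2 * M * ((N:ℤ) ^ d - ∏ i, ci i) := by
    rw [hsd1, hsd2] at habs
    linarith
  have hNnn : (0:ℤ) ≤ (N:ℤ) := by positivity
  have hpow : (0:ℤ) ≤ (N:ℤ) ^ d := by positivity
  calc |∑ u ∈ B, (g₀ - g₀.comp (φc φ v)) (φ u x)| * N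
      ≤ (2 * M * ((N:ℤ) ^ d - ∏ i, ci i)) * N :=
        mul_le_mul_of_nonneg_right habs2 hNnn
    _ = (2 * M) * ((N:ℤ) * ((N:ℤ) ^ d - ∏ i, ci i)) := by ring
    _ ≤ (2 * M) * ((∑ i, ((N:ℤ) - ci i)) * (N:ℤ) ^ d) :=
        mul_le_mul_of_nonneg_left key (by positivity)
    _ ≤ (2 * M) * ((∑ i, |v i|) * (N:ℤ) ^ d) :=
        mul_le_mul_of_nonneg_left (mul_le_mul_of_nonneg_right hS12 hpow) (by positivity)
    _ = 2 * M * (∑ i, |v i|) * (N:ℤ) ^ d := by ring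

lemma cob_Q {d : ℕ} {X : Type*} [TopologicalSpace X] [CompactSpace X]
    (φ : (Fin d → ℤ) → X ≃ₜ X) (hφadd : ∀ v w x, φ (v + w) x = φ v (φ w x))
    {ψ : C(X, ℤ)} (hψ : ψ ∈ cobSubgroup φ) :
    ∃ c : ℤ, 0 ≤ c ∧ ∀ (N : ℕ) (x : X),
      |∑ u ∈ boxZ d N, ψ (φ u x)| * N ≤ c * N ^ d := by
  refine AddSubgroup.closure_induction ?_ ?_ ?_ ?_ hψ
  · rintro ψ' ⟨g₀, v, rfl⟩
    exact gen_bound φ hφadd g₀ v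
  · exact ⟨0, le_refl 0, fun N x => by simp⟩
  · rintro a b - - ⟨c₁, hc₁, H₁⟩ ⟨c₂, hc₂, H₂⟩
    refine ⟨c₁ + c₂, by positivity, fun N x => ?_⟩
    have hsplit : ∑ u ∈ boxZ d N, (a + b) (φ u x)
        = ∑ u ∈ boxZ d N, a (φ u x) + ∑ u ∈ boxZ d N, b (φ u x) := by
      rw [← Finset.sum_add_distrib]
      exact Finset.sum_congr rfl fun u _ => rfl
    have habs : |∑ u ∈ boxZ d N, (a + b) (φ u x)|
        ≤ |∑ u ∈ boxZ d N, a (φ u x)| + |∑ u ∈ boxZ d N, b (φ u x)| := by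
      rw [hsplit]; exact abs_add_le _ _
    calc |∑ u ∈ boxZ d N, (a + b) (φ u x)| * N
        ≤ (|∑ u ∈ boxZ d N, a (φ u x)| + |∑ u ∈ boxZ d N, b (φ u x)|) * N :=
          mul_le_mul_of_nonneg_right habs (by positivity)
      _ = |∑ u ∈ boxZ d N, a (φ u x)| * N + |∑ u ∈ boxZ d N, b (φ u x)| * N := by ring
      _ ≤ c₁ * N ^ d + c₂ * N ^ d := add_le_add (H₁ N x) (H₂ N x)
      _ = (c₁ + c₂) * N ^ d := by ring
  · rintro a - ⟨c₁, hc₁, H₁⟩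
    refine ⟨c₁, hc₁, fun N x => ?_⟩
    have hneg : ∑ u ∈ boxZ d N, (-a) (φ u x) = -∑ u ∈ boxZ d N, a (φ u x) := by
      rw [← Finset.sum_neg_distrib]
      exact Finset.sum_congr rfl fun u _ => rfl
    rw [hneg, abs_neg]
    exact H₁ N x

lemma no_pos_cob {d : ℕ} {X : Type*} [TopologicalSpace X] [CompactSpace X]
    (φ : (Fin d → ℤ) → X ≃ₜ X) (hφadd : ∀ v w x, φ (v + w) x = φ v (φ w x))
    (hφmin : ∀ x : X, Dense {y | ∃ v, φ v x = y})
    (h' : C(X, ℤ)) (hmem : h' ∈ cobSubgroup φ) (hpos : ∀ x, 0 ≤ h' x)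
    (z₀ : X) (h1 : 1 ≤ h' z₀) : False := by
  classical
  obtain ⟨c, hc0, hQ⟩ := cob_Q φ hφadd hmem
  have hUopen : IsOpen (h' ⁻¹' Set.Ici 1) := (isOpen_discrete _).preimage h'.continuous
  have hUne : (h' ⁻¹' Set.Ici 1).Nonempty := ⟨z₀, h1⟩
  have hcov : (Set.univ : Set X) ⊆ ⋃ w, (φ w) ⁻¹' (h' ⁻¹' Set.Ici 1) := by
    intro x _
    obtain ⟨y, ⟨w, rfl⟩, hyU⟩ := (hφmin x).exists_mem_open hUopen hUne
    exact Set.mem_iUnion.2 ⟨w, hyU⟩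
  obtain ⟨F, hF⟩ := isCompact_univ.elim_finite_subcover
    (fun w => (φ w) ⁻¹' (h' ⁻¹' Set.Ici 1))
    (fun w => hUopen.preimage (φ w).continuous) hcov
  obtain ⟨R, hRF⟩ : ∃ R : ℕ, ∀ w ∈ F, ∀ i, (w i).natAbs ≤ R :=
    ⟨F.sup (fun w => Finset.univ.sup (fun i => (w i).natAbs)), fun w hw i =>
      le_trans (Finset.le_sup (f := fun i => (w i).natAbs) (Finset.mem_univ i))
        (Finset.le_sup (f := fun w => Finset.univ.sup (fun i => (w i).natAbs)) hw)⟩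
  have hA0 : (0:ℤ) ≤ (F.card : ℤ) * c := mul_nonneg (Int.natCast_nonneg _) hc0
  obtain ⟨T, hT0, hT1, hTle, hTpow⟩ : ∃ T : ℤ, 0 ≤ T ∧ T = ((1 + 2*R : ℕ) : ℤ) ^ d ∧
      (((F.card : ℤ) * c) * T ≤ ((((F.card : ℤ) * c).toNat : ℤ)) * T) ∧ True :=
    ⟨((1 + 2*R : ℕ) : ℤ) ^ d, by positivity, rfl,
      mul_le_mul_of_nonneg_right (Int.self_le_toNat _) (by positivity), trivial⟩
  obtain ⟨N, hN1, hNval⟩ : ∃ N : ℕ, 1 ≤ N ∧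
      (N:ℤ) = ((((F.card : ℤ) * c).toNat : ℤ)) * T + 1 := by
    refine ⟨((F.card : ℤ) * c).toNat * (1 + 2*R)^d + 1, Nat.le_add_left 1 _, ?_⟩
    rw [hT1]; push_cast; ring
  obtain ⟨Rv, hRv⟩ : ∃ Rv : Fin d → ℤ, ∀ i, Rv i = (R:ℤ) := ⟨fun _ => (R:ℤ), fun _ => rfl⟩
  set x' : X := φ (-Rv) z₀ with hx'
  set G : Finset (Fin d → ℤ) :=
    (boxZ d (N + 2*R)).filter (fun m => 1 ≤ h' (φ m x')) with hG
  have hmap : ∀ u ∈ boxZ d N, ∃ w ∈ F, w + u + Rv ∈ G := by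
    intro u hu
    have hmem0 := hF (Set.mem_univ (φ u z₀))
    rw [Set.mem_iUnion₂] at hmem0
    obtain ⟨w, hwF, hwU⟩ := hmem0
    refine ⟨w, hwF, ?_⟩
    have hmem' : w + u + Rv ∈ boxZ d (N + 2*R) := by
      rw [mem_box]
      intro i
      have h1' := (mem_box.1 hu) i
      have h2' := hRF w hwF i
      have h3 : (w + u + Rv) i = w i + u i + (R:ℤ) := by simp [hRv i]
      rw [h3]
      push_cast
      omega
    rw [hG, Finset.mem_filter]
    refine ⟨hmem', ?_⟩
    have e1 : φ (w + u + Rv) x' = φ (w + u) z₀ := by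
      rw [hx', phi_comp hφadd, show w + u + Rv + -Rv = w + u by ring]
    have e2 : φ (w + u) z₀ = φ w (φ u z₀) := hφadd w u _
    rw [e1, e2]
    exact hwU
  have hsubset : boxZ d N ⊆ F.biUnion (fun w => G.image (fun m => m - w - Rv)) := by
    intro u hu
    obtain ⟨w, hwF, hwG⟩ := hmap u hu
    refine Finset.mem_biUnion.2 ⟨w, hwF, Finset.mem_image.2 ⟨w + u + Rv, hwG, by ring⟩⟩
  have hcard1 : (N:ℤ)^d ≤ (F.card : ℤ) * (G.card : ℤ) := by
    have h1' : (boxZ d N).card ≤ F.card * G.card := by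
      refine le_trans (Finset.card_le_card hsubset) ?_
      refine le_trans (Finset.card_biUnion_le) ?_
      calc ∑ w ∈ F, (G.image (fun m => m - w - Rv)).card
          ≤ ∑ _w ∈ F, G.card := Finset.sum_le_sum (fun w _ => Finset.card_image_le)
        _ = F.card * G.card := by rw [Finset.sum_const]; ring
    rw [card_box] at h1'
    exact_mod_cast h1'
  have hS0 : 0 ≤ ∑ m ∈ boxZ d (N + 2*R), h' (φ m x') :=
    Finset.sum_nonneg (fun m _ => hpos _)
  have hGS : (G.card : ℤ) ≤ ∑ m ∈ boxZ d (N + 2*R), h' (φ m x') := by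
    calc (G.card : ℤ) = ∑ _m ∈ G, (1:ℤ) := by rw [Finset.sum_const]; ring
      _ ≤ ∑ m ∈ G, h' (φ m x') := Finset.sum_le_sum (fun m hm => by
          have := Finset.mem_filter.1 (by rw [hG] at hm; exact hm)
          exact this.2)
      _ ≤ _ := Finset.sum_le_sum_of_subset_of_nonneg (Finset.filter_subset _ _)
          (fun m _ _ => hpos _)
  have hQS := hQ (N + 2*R) x'
  rw [abs_of_nonneg hS0] at hQS
  have hcast : ((N + 2*R : ℕ) : ℤ) = (N:ℤ) + 2*R := by push_cast; ring
  rw [hcast] at hQS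
  have hN1' : (1:ℤ) ≤ (N:ℤ) := by exact_mod_cast hN1
  have hNR0 : (0:ℤ) ≤ (N:ℤ) + 2*R := by positivity
  have hmain : ((N:ℤ))^d * ((N:ℤ) + 2*R) ≤ ((F.card : ℤ) * c) * ((N:ℤ) + 2*R)^d := by
    have step1 : ((N:ℤ))^d * ((N:ℤ) + 2*R)
        ≤ (F.card : ℤ) * (∑ m ∈ boxZ d (N + 2*R), h' (φ m x')) * ((N:ℤ) + 2*R) := by
      have h0 : (N:ℤ)^d ≤ (F.card : ℤ) * (∑ m ∈ boxZ d (N + 2*R), h' (φ m x')) :=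
        le_trans hcard1 (mul_le_mul_of_nonneg_left hGS (Int.natCast_nonneg _))
      exact mul_le_mul_of_nonneg_right h0 hNR0
    refine le_trans step1 ?_
    calc (F.card : ℤ) * (∑ m ∈ boxZ d (N + 2*R), h' (φ m x')) * ((N:ℤ) + 2*R)
        = (F.card : ℤ) * ((∑ m ∈ boxZ d (N + 2*R), h' (φ m x')) * ((N:ℤ) + 2*R)) := by
          ring
      _ ≤ (F.card : ℤ) * (c * ((N:ℤ) + 2*R)^d) :=
          mul_le_mul_of_nonneg_left hQS (Int.natCast_nonneg _)
      _ = ((F.card : ℤ) * c) * ((N:ℤ) + 2*R)^d := by ring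
  have hNT : ((N:ℤ) + 2*R)^d ≤ T * (N:ℤ)^d := by
    have hle : (N:ℤ) + 2*R ≤ ((1 + 2*R : ℕ) : ℤ) * N := by
      push_cast
      nlinarith
    calc ((N:ℤ) + 2*R)^d ≤ (((1 + 2*R : ℕ) : ℤ) * N)^d :=
          pow_le_pow_left₀ hNR0 hle d
      _ = T * (N:ℤ)^d := by rw [hT1, mul_pow]
  have hNd0 : (0:ℤ) < (N:ℤ)^d := by positivity
  have hfin : (N:ℤ) + 2*R ≤ ((F.card : ℤ) * c) * T := by
    have h2' : ((N:ℤ))^d * ((N:ℤ) + 2*R) ≤ ((F.card : ℤ) * c) * T * (N:ℤ)^d := by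
      refine le_trans hmain ?_
      calc ((F.card : ℤ) * c) * ((N:ℤ) + 2*R)^d
          ≤ ((F.card : ℤ) * c) * (T * (N:ℤ)^d) := mul_le_mul_of_nonneg_left hNT hA0
        _ = ((F.card : ℤ) * c) * T * (N:ℤ)^d := by ring
    have h3' : ((N:ℤ) + 2*R) * (N:ℤ)^d ≤ (((F.card : ℤ) * c) * T) * (N:ℤ)^d := by
      calc ((N:ℤ) + 2*R) * (N:ℤ)^d = ((N:ℤ))^d * ((N:ℤ) + 2*R) := by ring
        _ ≤ ((F.card : ℤ) * c) * T * (N:ℤ)^d := h2'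
    exact le_of_mul_le_mul_right h3' hNd0
  have hR0 : (0:ℤ) ≤ (R:ℤ) := Int.natCast_nonneg _
  linarith


/-- Let `(X, φ, ℤ^d)` be a minimal Cantor system, `f, g ∈ C(X, ℤ)`, and
`P = {φ^w C_k : w ∈ P_k, 1 ≤ k ≤ K}` a clopen (Voronoi–Rohlin) partition of `X` such
that for all `k` and all `x ∈ C_k`, `Σ_{v ∈ P_k} g(φ^v x) ≥ Σ_{v ∈ P_k} f(φ^v x)`.
Then `[g] ≥ [f]` in `(G(φ), G(φ)₊)`; if moreover the inequality is strict for some `k`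
and some `x ∈ C_k`, then `[g] > [f]`. -/
theorem stmt_16 {d : ℕ} {X : Type*} [TopologicalSpace X] [CompactSpace X] [T2Space X]
    [TotallyDisconnectedSpace X] (hXp : Perfect (Set.univ : Set X))
    (φ : (Fin d → ℤ) → X ≃ₜ X)
    (hφadd : ∀ v w x, φ (v + w) x = φ v (φ w x))
    (hφmin : ∀ x : X, Dense {y | ∃ v, φ v x = y})
    (f g : C(X, ℤ))
    (K : ℕ) (C : Fin K → Set X) (hC : ∀ k, IsClopen (C k))
    (P : Fin K → Finset (Fin d → ℤ))
    (hdisj : ∀ (k k' : Fin K) (w w' : Fin d → ℤ), w ∈ P k → w' ∈ P k' →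
      (k, w) ≠ (k', w') → Disjoint ((φ w) '' C k) ((φ w') '' C k'))
    (hcover : (⋃ k, ⋃ w ∈ P k, (φ w) '' C k) = Set.univ)
    (hineq : ∀ k, ∀ x ∈ C k, ∑ v ∈ P k, f (φ v x) ≤ ∑ v ∈ P k, g (φ v x)) :
    (QuotientAddGroup.mk (g - f) : C(X, ℤ) ⧸ cobSubgroup φ) ∈ posCone φ ∧
    ((∃ k, ∃ x ∈ C k, ∑ v ∈ P k, f (φ v x) < ∑ v ∈ P k, g (φ v x)) →
      (QuotientAddGroup.mk g : C(X, ℤ) ⧸ cobSubgroup φ) ≠ QuotientAddGroup.mk f) := by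
  classical
  set h : C(X, ℤ) := g - f with hh
  -- choose base translates
  have hw0 : ∀ k : Fin K, ∃ w : Fin d → ℤ, (P k).Nonempty → w ∈ P k := by
    intro k
    by_cases hk : (P k).Nonempty
    · exact ⟨hk.choose, fun _ => hk.choose_spec⟩
    · exact ⟨0, fun hx => absurd hx hk⟩
  choose w₀ hw₀ using hw0
  -- the terms of h'
  set term : Fin K → C(X, ℤ) := fun k =>
    (∑ w ∈ P k, h.comp (φc φ (w - w₀ k))) * indC (clopen_image (φ := φ) (hC k) (w₀ k)) with hterm
  set h' : C(X, ℤ) := ∑ k, term k with hh'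
  -- value of a term on its base
  have hval : ∀ (k : Fin K) (y : X), y ∈ C k →
      term k (φ (w₀ k) y) = ∑ w ∈ P k, h (φ w y) := by
    intro k y hy
    rw [hterm]
    simp only [ContinuousMap.mul_apply, ContinuousMap.sum_apply, ContinuousMap.comp_apply]
    rw [indC_of_mem (clopen_image (φ := φ) (hC k) (w₀ k)) (Set.mem_image_of_mem _ hy),
      mul_one]
    refine Finset.sum_congr rfl fun w hw => ?_
    have : φ (w - w₀ k) (φc φ (w₀ k) y) = φ w y := by
      show φ (w - w₀ k) (φ (w₀ k) y) = φ w y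
      rw [phi_comp hφadd, show w - w₀ k + w₀ k = w by ring]
    show h (φ (w - w₀ k) (φ (w₀ k) y)) = h (φ w y)
    rw [show φ (w - w₀ k) (φ (w₀ k) y) = φ w y from this]
  -- nonnegativity of terms
  have htermpos : ∀ (k : Fin K) (x : X), 0 ≤ term k x := by
    intro k x
    by_cases hx : x ∈ φ (w₀ k) '' C k
    · obtain ⟨y, hy, rfl⟩ := hx
      rw [hval k y hy]
      have := hineq k y hy
      have hsub : ∑ w ∈ P k, h (φ w y) = ∑ w ∈ P k, g (φ w y) - ∑ w ∈ P k, f (φ w y) := by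
        rw [← Finset.sum_sub_distrib]
        exact Finset.sum_congr rfl fun w _ => rfl
      rw [hsub]
      omega
    · rw [hterm]
      simp only [ContinuousMap.mul_apply]
      rw [indC_of_not_mem _ hx, mul_zero]
  have hpos : ∀ x, 0 ≤ h' x := by
    intro x
    rw [hh', ContinuousMap.sum_apply]
    exact Finset.sum_nonneg fun k _ => htermpos k x
  -- h - h' is a coboundary
  have hcob : h - h' ∈ cobSubgroup φ := by
    have hpart : h = ∑ s ∈ Finset.univ.sigma P, h * indC (clopen_image (φ := φ) (hC s.1) s.2) := by
      ext x
      rw [ContinuousMap.sum_apply]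
      obtain ⟨k, hk, w, hw, hx⟩ : ∃ k, ∃ _ : k ∈ (Finset.univ : Finset (Fin K)),
          ∃ w ∈ P k, x ∈ φ w '' C k := by
        have := hcover ▸ Set.mem_univ x
        simp only [Set.mem_iUnion] at this
        obtain ⟨k, w, hw, hx⟩ := this
        exact ⟨k, Finset.mem_univ k, w, hw, hx⟩
      rw [Finset.sum_eq_single_of_mem (⟨k, w⟩ : (_ : Fin K) × (Fin d → ℤ))
        (Finset.mem_sigma.2 ⟨hk, hw⟩)]
      · simp only [ContinuousMap.mul_apply]
        rw [indC_of_mem _ hx, mul_one]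
      · rintro ⟨a, b⟩ hs hne
        have hb : b ∈ P a := (Finset.mem_sigma.1 hs).2
        simp only [ContinuousMap.mul_apply]
        rw [indC_of_not_mem _ ?_, mul_zero]
        intro hxa
        have hne' : ((a : Fin K), b) ≠ (k, w) := by
          intro hE
          apply hne
          have h1 : a = k := congrArg Prod.fst hE
          have h2 : b = w := congrArg Prod.snd hE
          subst h1; subst h2; rfl
        exact Set.disjoint_left.1 (hdisj a k b w hb hw hne') hxa hx
    have hh'sigma : h' = ∑ s ∈ Finset.univ.sigma P,
        (h * indC (clopen_image (φ := φ) (hC s.1) s.2)).comp (φc φ (s.2 - w₀ s.1)) := by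
      rw [hh', Finset.sum_sigma]
      refine Finset.sum_congr rfl fun k _ => ?_
      simp only [hterm]
      rw [Finset.sum_mul]
      refine Finset.sum_congr rfl fun w hw => ?_
      ext x
      simp only [ContinuousMap.mul_apply, ContinuousMap.comp_apply]
      have hiff : (φ (w - w₀ k) x ∈ φ w '' C k) ↔ (x ∈ φ (w₀ k) '' C k) := by
        rw [mem_image_shift hφadd, show w - (w - w₀ k) = w₀ k by ring]
      show h (φc φ (w - w₀ k) x) * indC (clopen_image (φ := φ) (hC k) (w₀ k)) x
          = h (φ (w - w₀ k) x) * indC (clopen_image (φ := φ) (hC k) w) (φ (w - w₀ k) x)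
      by_cases hx : x ∈ φ (w₀ k) '' C k
      · rw [indC_of_mem _ hx, indC_of_mem _ (hiff.2 hx)]; rfl
      · rw [indC_of_not_mem _ hx, indC_of_not_mem _ (fun hc => hx (hiff.1 hc))]; rfl
    rw [hpart, hh'sigma, ← Finset.sum_sub_distrib]
    exact AddSubgroup.sum_mem _ fun s _ => gen_mem_cob _ _
  constructor
  · exact ⟨h', hpos, (QuotientAddGroup.eq_iff_sub_mem).2 (by
      simpa using neg_mem hcob)⟩
  · rintro ⟨k₀, x₀, hx₀, hstrict⟩ heq
    have hgf : g - f ∈ cobSubgroup φ := (QuotientAddGroup.eq_iff_sub_mem).1 heq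
    have hmem : h' ∈ cobSubgroup φ := by
      have : h' = h - (h - h') := by ring
      rw [this]
      exact sub_mem hgf hcob
    have h1 : 1 ≤ h' (φ (w₀ k₀) x₀) := by
      have hterm1 : 1 ≤ term k₀ (φ (w₀ k₀) x₀) := by
        rw [hval k₀ x₀ hx₀]
        have hsub : ∑ w ∈ P k₀, h (φ w x₀)
            = ∑ w ∈ P k₀, g (φ w x₀) - ∑ w ∈ P k₀, f (φ w x₀) := by
          rw [← Finset.sum_sub_distrib]
          exact Finset.sum_congr rfl fun w _ => rfl
        rw [hsub]
        omega
      calc (1:ℤ) ≤ term k₀ (φ (w₀ k₀) x₀) := hterm1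
        _ ≤ ∑ k, term k (φ (w₀ k₀) x₀) :=
            Finset.single_le_sum (fun k _ => htermpos k _) (Finset.mem_univ k₀)
        _ = h' (φ (w₀ k₀) x₀) := by rw [hh', ContinuousMap.sum_apply]
    exact no_pos_cob φ hφadd hφmin h' hmem hpos _ h1
end

section
/- Let θ : X → Y be a bounded orbit injection between minimal Cantor systems (X, φ, ℤ^d) and (Y, ψ, ℤ^d). Then the map sending [1_A] to [1_{θ(A)}] for clopen A ⊆ X extends to a well-defined group homomorphism h_θ : G(φ) → G(ψ); in particular, for every clopen A ⊆ X and v ∈ ℤ^d, the function 1_{θ(A)} − 1_{θ(φ^v A)} is a ψ-coboundary. -/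
open Classical in
noncomputable def clopInd {X : Type*} [TopologicalSpace X] {A : Set X} (hA : IsClopen A) :
    C(X, ℤ) :=
  ⟨A.indicator 1, by
    apply IsLocallyConstant.continuous
    intro s
    have : (A.indicator (1 : X → ℤ)) ⁻¹' s =
        (A ∩ {x | (1:ℤ) ∈ s}) ∪ (Aᶜ ∩ {x | (0:ℤ) ∈ s}) := by
      ext x
      by_cases hx : x ∈ A <;> simp [Set.indicator_apply, hx]
    rw [this]
    by_cases h1 : (1:ℤ) ∈ s <;> by_cases h0 : (0:ℤ) ∈ s <;>
      simp [h1, h0, hA.isOpen, hA.compl.isOpen]⟩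

@[simp] lemma clopInd_apply {X : Type*} [TopologicalSpace X] {A : Set X} (hA : IsClopen A)
    (x : X) : clopInd hA x = A.indicator 1 x := rfl

section Ext
variable {X Y : Type*} [TopologicalSpace X] [CompactSpace X]
  [TopologicalSpace Y] [T2Space Y]
  (θ : X → Y) (hθc : Continuous θ) (hθo : IsOpenMap θ) (hθi : Function.Injective θ)

open Classical in
/-- extension by zero of `g ∘ θ⁻¹` -/
noncomputable def extFun (g : C(X, ℤ)) : C(Y, ℤ) :=
  ⟨fun y => if h : y ∈ Set.range θ then g h.choose else 0, by
    apply IsLocallyConstant.continuous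
    intro s
    have key : (fun y => if h : y ∈ Set.range θ then g h.choose else 0) ⁻¹' s =
        (θ '' (⇑g ⁻¹' s)) ∪ ((Set.range θ)ᶜ ∩ {_y | (0:ℤ) ∈ s}) := by
      ext y
      by_cases h : y ∈ Set.range θ
      · simp only [Set.mem_preimage, h, dif_pos, Set.mem_union, Set.mem_inter_iff,
          Set.mem_compl_iff, not_true, false_and, or_false, Set.mem_image]
        constructor
        · intro hs; exact ⟨h.choose, hs, h.choose_spec⟩
        · rintro ⟨x, hx, rfl⟩
          have hx' : (⟨x, rfl⟩ : ∃ x', θ x' = θ x).choose = x :=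
            hθi (⟨x, rfl⟩ : ∃ x', θ x' = θ x).choose_spec
          simpa [hx'] using hx
      · simp only [Set.mem_preimage, h, dif_neg, Set.mem_union, Set.mem_inter_iff,
          Set.mem_compl_iff, not_false_iff, true_and, Set.mem_image, Set.mem_setOf_eq]
        constructor
        · intro hs; exact Or.inr hs
        · rintro (⟨x, _, rfl⟩ | hs)
          · exact absurd ⟨x, rfl⟩ h
          · exact hs
    rw [key]
    refine ((hθo _ (g.continuous.isOpen_preimage _ (isOpen_discrete s))).union ?_)
    by_cases h0 : (0:ℤ) ∈ s
    · simpa [h0] using (isCompact_range hθc).isClosed.isOpen_compl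
    · simp [h0]⟩

end Ext

section Ext2
variable {X Y : Type*} [TopologicalSpace X] [CompactSpace X]
  [TopologicalSpace Y] [T2Space Y]
  (θ : X → Y) (hθc : Continuous θ) (hθo : IsOpenMap θ) (hθi : Function.Injective θ)

lemma extFun_apply_mem (g : C(X, ℤ)) (x : X) :
    extFun θ hθc hθo hθi g (θ x) = g x := by
  have h : θ x ∈ Set.range θ := ⟨x, rfl⟩
  have hx : h.choose = x := hθi h.choose_spec
  simp only [extFun, ContinuousMap.coe_mk, dif_pos h, hx]

lemma extFun_apply_notMem (g : C(X, ℤ)) {y : Y} (hy : y ∉ Set.range θ) :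
    extFun θ hθc hθo hθi g y = 0 := by
  simp only [extFun, ContinuousMap.coe_mk, dif_neg hy]

noncomputable def extMap : C(X, ℤ) →+ C(Y, ℤ) where
  toFun := extFun θ hθc hθo hθi
  map_zero' := by
    ext y
    by_cases h : y ∈ Set.range θ
    · obtain ⟨x, rfl⟩ := h; simp [extFun_apply_mem]
    · simp [extFun_apply_notMem θ hθc hθo hθi _ h]
  map_add' g₁ g₂ := by
    ext y
    by_cases h : y ∈ Set.range θ
    · obtain ⟨x, rfl⟩ := h; simp [extFun_apply_mem]
    · simp [extFun_apply_notMem θ hθc hθo hθi _ h]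

lemma extMap_apply_mem (g : C(X, ℤ)) (x : X) :
    extMap θ hθc hθo hθi g (θ x) = g x := extFun_apply_mem θ hθc hθo hθi g x

lemma extMap_apply_notMem (g : C(X, ℤ)) {y : Y} (hy : y ∉ Set.range θ) :
    extMap θ hθc hθo hθi g y = 0 := extFun_apply_notMem θ hθc hθo hθi g hy

end Ext2

section Key
variable {d : ℕ} {X Y : Type*} [TopologicalSpace X] [CompactSpace X]
  [TopologicalSpace Y] [T2Space Y]
  (φ : (Fin d → ℤ) → X ≃ₜ X) (ψ : (Fin d → ℤ) → Y ≃ₜ Y)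
  (θ : X → Y) (hθc : Continuous θ) (hθo : IsOpenMap θ) (hθi : Function.Injective θ)

lemma key_mem (η : X → (Fin d → ℤ) → (Fin d → ℤ))
    (hη : ∀ x w, ψ (η x w) (θ x) = θ (φ w x))
    (hηc : ∀ w, Continuous fun x => η x w)
    (g : C(X, ℤ)) (v : Fin d → ℤ) :
    extMap θ hθc hθo hθi g -
      extMap θ hθc hθo hθi (g.comp ⟨⇑(φ v), (φ v).continuous⟩) ∈ cobSubgroup ψ := by
  set T := extMap θ hθc hθo hθi with hTdef
  have hfin : (Set.range fun x => η x v).Finite :=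
    (isCompact_range (hηc v)).finite_of_discrete
  set W : Finset (Fin d → ℤ) := hfin.toFinset with hW
  -- clopen level sets
  have hC : ∀ w : Fin d → ℤ, IsClopen {x : X | η ((φ v).symm x) v = w} := fun w =>
    (isClopen_discrete {w}).preimage ((hηc v).comp (φ v).symm.continuous)
  set gw : (Fin d → ℤ) → C(X, ℤ) := fun w => g * clopInd (hC w) with hgw
  have hmemW : ∀ x : X, η x v ∈ W := fun x => by
    simp only [hW, Set.Finite.mem_toFinset]; exact ⟨x, rfl⟩
  -- (a) decomposition of g
  have hsum : (∑ w ∈ W, gw w) = g := by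
    ext x
    rw [ContinuousMap.sum_apply]
    rw [Finset.sum_eq_single (η ((φ v).symm x) v)]
    · simp [hgw, Set.indicator_apply]
    · intro w _ hne
      have : x ∉ {x : X | η ((φ v).symm x) v = w} := fun h => hne (h ▸ rfl)
      simp [hgw, Set.indicator_apply, this]
    · intro h; exact absurd (hmemW _) h
  -- (b) pointwise identity for the composed function
  have hB : T (g.comp ⟨⇑(φ v), (φ v).continuous⟩) =
      ∑ w ∈ W, (T (gw w)).comp ⟨⇑(ψ w), (ψ w).continuous⟩ := by
    ext y
    rw [ContinuousMap.sum_apply]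
    by_cases hy : y ∈ Set.range θ
    · obtain ⟨x, rfl⟩ := hy
      rw [hTdef, extMap_apply_mem]
      simp only [ContinuousMap.comp_apply, ContinuousMap.coe_mk]
      rw [Finset.sum_eq_single (η x v)]
      · rw [hη x v, extMap_apply_mem]
        have hx : φ v x ∈ {x' : X | η ((φ v).symm x') v = η x v} := by
          simp [(φ v).symm_apply_apply]
        simp [hgw, Set.indicator_apply, hx]
      · intro w _ hne
        by_cases hr : ψ w (θ x) ∈ Set.range θ
        · obtain ⟨x', hx'⟩ := hr
          rw [← hx', extMap_apply_mem]
          have hnot : x' ∉ {x'' : X | η ((φ v).symm x'') v = w} := by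
            intro hmem
            have h1 : θ x' = ψ w (θ ((φ v).symm x')) := by
              conv_lhs => rw [← (φ v).apply_symm_apply x']
              rw [← hη ((φ v).symm x') v, hmem]
            have h2 : θ x = θ ((φ v).symm x') :=
              (ψ w).injective (by rw [← hx']; exact h1)
            have h3 : x = (φ v).symm x' := hθi h2
            exact hne (by rw [h3]; exact hmem.symm)
          simp [hgw, Set.indicator_apply, hnot]
        · exact extMap_apply_notMem θ hθc hθo hθi _ hr
      · intro h; exact absurd (hmemW _) h
    · rw [hTdef, extMap_apply_notMem θ hθc hθo hθi _ hy]
      refine (Finset.sum_eq_zero fun w _ => ?_).symm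
      simp only [ContinuousMap.comp_apply, ContinuousMap.coe_mk]
      by_cases hr : ψ w y ∈ Set.range θ
      · obtain ⟨x', hx'⟩ := hr
        rw [← hx', extMap_apply_mem]
        have hnot : x' ∉ {x'' : X | η ((φ v).symm x'') v = w} := by
          intro hmem
          have h1 : θ x' = ψ w (θ ((φ v).symm x')) := by
            conv_lhs => rw [← (φ v).apply_symm_apply x']
            rw [← hη ((φ v).symm x') v, hmem]
          have h2 : y = θ ((φ v).symm x') :=
            (ψ w).injective (by rw [← hx']; exact h1)
          exact hy ⟨_, h2.symm⟩
        simp [hgw, Set.indicator_apply, hnot]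
      · exact extMap_apply_notMem θ hθc hθo hθi _ hr
  have hA : T g = ∑ w ∈ W, T (gw w) := by
    rw [← map_sum, hsum]
  rw [hA, hB, ← Finset.sum_sub_distrib]
  exact AddSubgroup.sum_mem _ fun w _ =>
    AddSubgroup.subset_closure ⟨T (gw w), w, rfl⟩

end Key

/-- Let `θ : X → Y` be a bounded orbit injection between minimal Cantor
systems. Then `[1_A] ↦ [1_{θ(A)}]` extends to a well-defined group homomorphism
`h_θ : G(φ) → G(ψ)`; in particular, for every clopen `A ⊆ X` and `v ∈ ℤ^d`, the
function `1_{θ(A)} − 1_{θ(φ^v A)}` is a `ψ`-coboundary. -/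
theorem stmt_17 {d : ℕ} {X Y : Type*}
    [TopologicalSpace X] [CompactSpace X] [T2Space X] [TotallyDisconnectedSpace X]
    [TopologicalSpace Y] [CompactSpace Y] [T2Space Y] [TotallyDisconnectedSpace Y]
    (hXp : Perfect (Set.univ : Set X)) (hYp : Perfect (Set.univ : Set Y))
    (φ : (Fin d → ℤ) → X ≃ₜ X) (ψ : (Fin d → ℤ) → Y ≃ₜ Y)
    (hφadd : ∀ v w x, φ (v + w) x = φ v (φ w x))
    (hψadd : ∀ v w y, ψ (v + w) y = ψ v (ψ w y))
    (hφmin : ∀ x : X, Dense {y | ∃ v, φ v x = y})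
    (hψmin : ∀ y : Y, Dense {z | ∃ v, ψ v y = z})
    (hφfree : ∀ (v) (x : X), φ v x = x → v = 0)
    (hψfree : ∀ (v) (y : Y), ψ v y = y → v = 0)
    (θ : X → Y) (hθc : Continuous θ) (hθo : IsOpenMap θ) (hθi : Function.Injective θ)
    (horb : ∀ x y : X, (∃ w, φ w x = y) ↔ ∃ v, ψ v (θ x) = θ y)
    (η : X → (Fin d → ℤ) → (Fin d → ℤ))
    (hη : ∀ x w, ψ (η x w) (θ x) = θ (φ w x))
    (hηc : ∀ w, Continuous fun x => η x w) :
    (∀ (A : Set X), IsClopen A → ∀ (v : Fin d → ℤ) (F G : C(Y, ℤ)),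
      (∀ y, F y = Set.indicator (θ '' A) 1 y) →
      (∀ y, G y = Set.indicator (θ '' ((φ v) '' A)) 1 y) →
      F - G ∈ cobSubgroup ψ) ∧
    ∃ hθ : (C(X, ℤ) ⧸ cobSubgroup φ) →+ (C(Y, ℤ) ⧸ cobSubgroup ψ),
      ∀ (A : Set X), IsClopen A → ∀ (f : C(X, ℤ)) (F : C(Y, ℤ)),
        (∀ x, f x = Set.indicator A 1 x) →
        (∀ y, F y = Set.indicator (θ '' A) 1 y) →
        hθ (QuotientAddGroup.mk f) = QuotientAddGroup.mk F := by
  set T := extMap θ hθc hθo hθi with hTdef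
  have hkey := key_mem φ ψ θ hθc hθo hθi η hη hηc
  -- T sends indicator of A to indicator of θ '' A
  have hTind : ∀ (A : Set X) (f : C(X, ℤ)) (F : C(Y, ℤ)),
      (∀ x, f x = A.indicator 1 x) → (∀ y, F y = (θ '' A).indicator 1 y) → T f = F := by
    intro A f F hf hF
    ext y
    by_cases hy : y ∈ Set.range θ
    · obtain ⟨x, rfl⟩ := hy
      rw [hTdef, extMap_apply_mem, hf, hF]
      by_cases hx : x ∈ A
      · simp [Set.indicator_apply, hx, Set.mem_image_of_mem θ hx]
      · simp [Set.indicator_apply, hx, (hθi.mem_set_image).not.2 hx]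
    · rw [hTdef, extMap_apply_notMem θ hθc hθo hθi _ hy, hF]
      have : y ∉ θ '' A := fun ⟨x, _, hx⟩ => hy ⟨x, hx⟩
      simp [Set.indicator_apply, this]
  constructor
  · intro A hA v F G hF hG
    have hB : IsClopen ((φ v) '' A) :=
      ⟨(φ v).isClosedMap _ hA.isClosed, (φ v).isOpenMap _ hA.isOpen⟩
    set f1 : C(X, ℤ) := clopInd hB with hf1
    have h1 : T f1 = G := hTind _ _ _ (fun x => rfl) hG
    have h2 : T (f1.comp ⟨⇑(φ v), (φ v).continuous⟩) = F := by
      refine hTind A _ _ (fun x => ?_) hF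
      simp only [ContinuousMap.comp_apply, ContinuousMap.coe_mk, hf1, clopInd_apply]
      by_cases hx : x ∈ A
      · simp [Set.indicator_apply, hx, Set.mem_image_of_mem (φ v) hx]
      · simp [Set.indicator_apply, hx, ((φ v).injective.mem_set_image).not.2 hx]
    have := hkey f1 v
    rw [h1, h2] at this
    simpa using (cobSubgroup ψ).neg_mem this
  · set Q : C(X, ℤ) →+ C(Y, ℤ) ⧸ cobSubgroup ψ :=
      (QuotientAddGroup.mk' (cobSubgroup ψ)).comp T with hQ
    have hle : cobSubgroup φ ≤ Q.ker := by
      rw [cobSubgroup]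
      refine (AddSubgroup.closure_le _).2 ?_
      rintro f ⟨g, v, rfl⟩
      rw [SetLike.mem_coe, AddMonoidHom.mem_ker, hQ, AddMonoidHom.comp_apply,
        QuotientAddGroup.mk'_apply, map_sub]
      exact (QuotientAddGroup.eq_zero_iff _).2 (hkey g v)
    refine ⟨QuotientAddGroup.lift (cobSubgroup φ) Q
      hle, ?_⟩
    intro A hA f F hf hF
    have : Q f = QuotientAddGroup.mk F := by
      rw [hQ, AddMonoidHom.comp_apply, QuotientAddGroup.mk'_apply, hTind A f F hf hF]
    rw [QuotientAddGroup.lift_mk, this]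
end

section
/- Let m ≥ 1 and let (X, φ, ℤ^d) be a minimal free Cantor system. Define the tower of height m: X(m) = X × {0,1,…,m−1}^d with action φ̂^v(x,u) = (φ^w(x), r) where v + u = mw + r with r ∈ {0,…,m−1}^d. Then (X(m), φ̂, ℤ^d) is a minimal free Cantor system, and the map θ(x) = (x,0) is a bounded orbit injection from (X, φ, ℤ^d) into (X(m), φ̂, ℤ^d). -/
/-- Uniqueness of Euclidean division with positive divisor. -/
lemma stmt_18_aux_div {m : ℕ} (hm : 0 < m) {w s r r' : ℤ}
    (h : (m : ℤ) * w + r = (m : ℤ) * s + r') (hr : 0 ≤ r) (hr2 : r < m)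
    (hr' : 0 ≤ r') (hr2' : r' < m) : w = s ∧ r = r' := by
  have hm0 : (m : ℤ) ≠ 0 := by positivity
  have key : ∀ (a q : ℤ), 0 ≤ a → a < m → ((m : ℤ) * q + a) / m = q := by
    intro a q ha ha2
    rw [add_comm, Int.add_mul_ediv_left a q hm0, Int.ediv_eq_zero_of_lt ha ha2, zero_add]
  have hw : w = s := by
    rw [← key r w hr hr2, h, key r' s hr' hr2']
  refine ⟨hw, ?_⟩
  rw [hw] at h
  exact add_left_cancel h

/-- Let `m ≥ 1` and `(X, φ, ℤ^d)` a minimal free Cantor system. The tower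
of height `m` is `X(m) = X × {0,…,m−1}^d` with action `φ̂^v(x,u) = (φ^w x, r)` where
`v + u = mw + r`, `r ∈ {0,…,m−1}^d` (componentwise). Then `(X(m), φ̂, ℤ^d)` is a minimal
free Cantor system and `θ(x) = (x, 0)` is a bounded orbit injection from `(X, φ, ℤ^d)`
into `(X(m), φ̂, ℤ^d)`. -/
theorem stmt_18 {d m : ℕ} (hm : 0 < m) {X : Type*} [TopologicalSpace X] [CompactSpace X]
    [T2Space X] [TotallyDisconnectedSpace X] (hXp : Perfect (Set.univ : Set X))
    (φ : (Fin d → ℤ) → X ≃ₜ X)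
    (hφadd : ∀ v w x, φ (v + w) x = φ v (φ w x))
    (hφmin : ∀ x : X, Dense {y | ∃ v, φ v x = y})
    (hφfree : ∀ (v) (x : X), φ v x = x → v = 0)
    (φh : (Fin d → ℤ) → (X × (Fin d → Fin m)) ≃ₜ (X × (Fin d → Fin m)))
    (hdesc : ∀ (v : Fin d → ℤ) (x : X) (u : Fin d → Fin m),
      ∃ (w : Fin d → ℤ) (r : Fin d → Fin m),
        (∀ i, v i + (u i : ℤ) = (m : ℤ) * w i + (r i : ℤ)) ∧ φh v (x, u) = (φ w x, r)) :
    (∀ p : X × (Fin d → Fin m), Dense {q | ∃ v, φh v p = q}) ∧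
    (∀ (v) (p : X × (Fin d → Fin m)), φh v p = p → v = 0) ∧
    Perfect (Set.univ : Set (X × (Fin d → Fin m))) ∧
    (let θ : X → X × (Fin d → Fin m) := fun x => (x, fun _ => ⟨0, hm⟩)
     Continuous θ ∧ IsOpenMap θ ∧ Function.Injective θ ∧
      (∀ x y : X, (∃ w, φ w x = y) ↔ ∃ v, φh v (θ x) = θ y) ∧
      ∃ η : X → (Fin d → ℤ) → (Fin d → ℤ),
        (∀ x w, φh (η x w) (θ x) = θ (φ w x)) ∧ ∀ w, Continuous fun x => η x w) := by
  -- The key computation lemma: φh v (x,u) = (φ s x, u') whenever v + u = m s + u'.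
  have hφh : ∀ (v : Fin d → ℤ) (x : X) (u : Fin d → Fin m) (s : Fin d → ℤ)
      (u' : Fin d → Fin m), (∀ i, v i + (u i : ℤ) = (m : ℤ) * s i + (u' i : ℤ)) →
      φh v (x, u) = (φ s x, u') := by
    intro v x u s u' he
    obtain ⟨w, r, h1, h2⟩ := hdesc v x u
    have hws : ∀ i, w i = s i ∧ ((r i : ℤ) = (u' i : ℤ)) := by
      intro i
      refine stmt_18_aux_div hm ?_ (Int.natCast_nonneg _) ?_ (Int.natCast_nonneg _) ?_
      · rw [← h1 i, he i]
      · exact_mod_cast (r i).isLt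
      · exact_mod_cast (u' i).isLt
    have hw : w = s := funext fun i => (hws i).1
    have hr : r = u' := funext fun i => Fin.ext (by exact_mod_cast (hws i).2)
    rw [h2, hw, hr]
  refine ⟨?_, ?_, ?_, ?_⟩
  · -- minimality
    rintro ⟨x, u⟩
    rw [dense_iff_inter_open]
    rintro U hU ⟨⟨y, u'⟩, hyU⟩
    have hV : IsOpen {z : X | (z, u') ∈ U} :=
      hU.preimage (continuous_id.prodMk continuous_const)
    obtain ⟨z, hzV, s, hs⟩ := (hφmin x).inter_open_nonempty _ hV ⟨y, hyU⟩
    exact ⟨(z, u'), hzV, fun i => (u' i : ℤ) - (u i : ℤ) + (m : ℤ) * s i, by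
      rw [hφh _ x u s u' (fun i => by ring), hs]⟩
  · -- freeness
    rintro v ⟨x, u⟩ h
    obtain ⟨w, r, h1, h2⟩ := hdesc v x u
    rw [h2, Prod.mk.injEq] at h
    have hw : w = 0 := hφfree w x h.1
    funext i
    have := h1 i
    rw [hw, h.2] at this
    simp only [Pi.zero_apply, mul_zero, zero_add] at this ⊢
    omega
  · -- perfectness
    refine ⟨isClosed_univ, ?_⟩
    rintro ⟨x, u⟩ -
    have hx : AccPt x (Filter.principal Set.univ) := hXp.acc x (Set.mem_univ x)
    rw [AccPt, Filter.principal_univ, inf_top_eq] at hx ⊢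
    have hcont : ContinuousWithinAt (fun z : X => (z, u)) {x}ᶜ x :=
      ((continuous_id.prodMk continuous_const).continuousAt).continuousWithinAt
    have hmaps : Set.MapsTo (fun z : X => (z, u)) {x}ᶜ {((x, u) : X × (Fin d → Fin m))}ᶜ := by
      intro z hz h'
      exact hz (by simpa using congrArg Prod.fst h')
    have := hcont.tendsto_nhdsWithin hmaps
    exact this.neBot
  · intro θ
    have hθv : ∀ x : X, θ x = (x, fun _ => ⟨0, hm⟩) := fun _ => rfl
    refine ⟨continuous_id.prodMk continuous_const, ?_, ?_, ?_, ?_⟩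
    · -- open map
      intro U hU
      have himg : θ '' U = U ×ˢ ({fun _ => ⟨0, hm⟩} : Set (Fin d → Fin m)) := by
        ext ⟨a, b⟩
        simp only [Set.mem_image, Set.mem_prod, Set.mem_singleton_iff]
        constructor
        · rintro ⟨z, hz, h⟩
          rw [hθv] at h
          obtain ⟨rfl, rfl⟩ := Prod.mk.injEq .. ▸ h
          exact ⟨hz, rfl⟩
        · rintro ⟨ha, rfl⟩
          exact ⟨a, ha, rfl⟩
      rw [himg]
      exact hU.prod (isOpen_discrete _)
    · -- injective
      intro a b h
      exact congrArg Prod.fst h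
    · -- orbit injection
      intro x y
      constructor
      · rintro ⟨w, rfl⟩
        refine ⟨fun i => (m : ℤ) * w i, ?_⟩
        rw [hθv, hθv, hφh _ x _ w (fun _ => ⟨0, hm⟩) (fun i => by simp)]
      · rintro ⟨v, hv⟩
        obtain ⟨w, r, h1, h2⟩ := hdesc v x (fun _ => ⟨0, hm⟩)
        rw [hθv x, h2, hθv y, Prod.mk.injEq] at hv
        exact ⟨w, hv.1⟩
    · -- cocycle
      refine ⟨fun _ w i => (m : ℤ) * w i, fun x w => ?_, fun w => continuous_const⟩
      rw [hθv, hθv, hφh _ x _ w (fun _ => ⟨0, hm⟩) (fun i => by simp)]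
end
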